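/- arXiv:2101.04634 — 3 statements merged into one kernel-verified Lean document; each statement's English description precedes it below -/
import Mathlib

section
/- For every fixed s_0 ∈ {1,...,D_m} and every permutation τ of {1,...,k} with τ ≠ id, letting L_τ denote the number of points of {1,...,k} lying on non-trivial cycles of τ (i.e. the cardinality of the support of τ), one has ∑_{(s_1,...,s_k) ∈ {1,...,D_m}^k} ∏_{i=1}^k |⟨y^{τ(i)}_{s_0 s_1 ... s_{τ(i)}} | y^i_{s_0 s_1 ... s_i}⟩| · λ^i_{s_0 s_1 ... s_i} ≤ D^{k − ⌊L_τ/2⌋}, where ⌊·⌋ denotes the floor function. -/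
open Matrix


open Finset

private lemma aux_sum_prod_le {Dm : ℕ} (hDm : 0 < Dm) :
    ∀ (n : ℕ) (F : Fin n → (Fin n → Fin Dm) → ℝ) (B : Fin n → ℝ),
      (∀ i s, 0 ≤ F i s) →
      (∀ (i : Fin n) (s s' : Fin n → Fin Dm), (∀ j, j ≤ i → s j = s' j) → F i s = F i s') →
      (∀ i s, ∑ t : Fin Dm, F i (Function.update s i t) ≤ B i) →
      ∑ s : Fin n → Fin Dm, ∏ i, F i s ≤ ∏ i, B i := by
  intro n
  induction n with
  | zero =>
    intro F B _ _ _
    simp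
  | succ n ih =>
    intro F B hF0 hFdep hFsum
    have t0 : Fin Dm := ⟨0, hDm⟩
    have hB0 : ∀ i : Fin (n+1), 0 ≤ B i := fun i =>
      le_trans (Finset.sum_nonneg fun t _ => hF0 _ _) (hFsum i (fun _ => t0))
    rw [← Equiv.sum_comp (Fin.snocEquiv (fun _ : Fin (n+1) => Fin Dm))
      (fun s => ∏ i, F i s), Fintype.sum_prod_type]
    have hsnoc : ∀ (t : Fin Dm) (p : Fin n → Fin Dm),
        (Fin.snocEquiv (fun _ : Fin (n+1) => Fin Dm)) (t, p) = Fin.snoc p t :=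
      fun t p => funext fun i => rfl
    simp_rw [hsnoc]
    have key : ∀ p : Fin n → Fin Dm, ∀ t : Fin Dm,
        ∏ i : Fin (n+1), F i (Fin.snoc p t)
          = (∏ i : Fin n, F i.castSucc (Fin.snoc p t0)) * F (Fin.last n) (Fin.snoc p t) := by
      intro p t
      rw [Fin.prod_univ_castSucc]
      congr 1
      refine Finset.prod_congr rfl fun i _ => ?_
      refine hFdep i.castSucc _ _ fun j hj => ?_
      have hne : j ≠ Fin.last n := by
        intro h; rw [h] at hj
        exact absurd (lt_of_le_of_lt hj i.castSucc_lt_last) (lt_irrefl _)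
      obtain ⟨j', rfl⟩ := Fin.exists_castSucc_eq.2 hne
      simp [Fin.snoc_castSucc]
    calc ∑ x : Fin Dm, ∑ p : Fin n → Fin Dm, ∏ i : Fin (n+1), F i (Fin.snoc p x)
        = ∑ p : Fin n → Fin Dm, (∏ i : Fin n, F i.castSucc (Fin.snoc p t0)) *
            ∑ t : Fin Dm, F (Fin.last n) (Fin.snoc p t) := by
          rw [Finset.sum_comm]
          refine Finset.sum_congr rfl fun p _ => ?_
          rw [Finset.mul_sum]
          exact Finset.sum_congr rfl fun t _ => key p t
      _ ≤ ∑ p : Fin n → Fin Dm, (∏ i : Fin n, F i.castSucc (Fin.snoc p t0)) * B (Fin.last n) := by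
          refine Finset.sum_le_sum fun p _ => ?_
          refine mul_le_mul_of_nonneg_left ?_ (Finset.prod_nonneg fun i _ => hF0 _ _)
          have : ∀ t : Fin Dm, (Fin.snoc p t : Fin (n+1) → Fin Dm)
              = Function.update (Fin.snoc p t0 : Fin (n+1) → Fin Dm) (Fin.last n) t := by
            intro t; rw [Fin.update_snoc_last]
          calc ∑ t : Fin Dm, F (Fin.last n) (Fin.snoc p t)
              = ∑ t : Fin Dm, F (Fin.last n) (Function.update (Fin.snoc p t0) (Fin.last n) t) :=
                Finset.sum_congr rfl fun t _ => by rw [this t]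
            _ ≤ B (Fin.last n) := hFsum _ _
      _ ≤ (∏ i : Fin n, B i.castSucc) * B (Fin.last n) := by
          rw [← Finset.sum_mul]
          refine mul_le_mul_of_nonneg_right ?_ (hB0 _)
          refine ih (fun i p => F i.castSucc (Fin.snoc p t0)) (fun i => B i.castSucc)
            (fun i p => hF0 _ _) ?_ ?_
          · intro i p p' hag
            refine hFdep _ _ _ fun j hj => ?_
            have hne : j ≠ Fin.last n := by
              intro h; rw [h] at hj
              exact absurd (lt_of_le_of_lt hj i.castSucc_lt_last) (lt_irrefl _)
            obtain ⟨j', rfl⟩ := Fin.exists_castSucc_eq.2 hne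
            simp only [Fin.snoc_castSucc]
            exact hag j' (by simpa [Fin.castSucc_le_castSucc_iff] using hj)
          · intro i p
            have : ∀ t, (Fin.snoc (Function.update p i t) t0 : Fin (n+1) → Fin Dm)
                = Function.update (Fin.snoc p t0 : Fin (n+1) → Fin Dm) i.castSucc t := by
              intro t; rw [Fin.snoc_update]
            simp_rw [this]
            exact hFsum i.castSucc _
      _ = ∏ i : Fin (n+1), B i := (Fin.prod_univ_castSucc B).symm

private lemma aux_prod_sqrt {ι : Type*} [DecidableEq ι] (s : Finset ι) (f : ι → ℝ)
    (hf : ∀ i ∈ s, 0 ≤ f i) :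
    ∏ i ∈ s, Real.sqrt (f i) = Real.sqrt (∏ i ∈ s, f i) := by
  induction s using Finset.induction with
  | empty => simp
  | @insert a s' hnot ih =>
    rw [Finset.prod_insert hnot, Finset.prod_insert hnot,
      ih (fun i hi => hf i (Finset.mem_insert_of_mem hi)),
      Real.sqrt_mul (hf a (Finset.mem_insert_self a s'))]

private lemma aux_step_bound {α : Type*} [DecidableEq α] {Dm D : ℕ} (hD : 1 ≤ D)
    (μ : Fin Dm → ℝ) (hμ0 : ∀ t, 0 ≤ μ t)
    (g : Fin Dm → α → ℝ) (hg0 : ∀ t a, 0 ≤ g t a)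
    (hsum : ∑ t, μ t = (D : ℝ))
    (T : Finset α) (hT : T.card ≤ 2)
    (hquad : ∀ a ∈ T, ∑ t, μ t * (g t a) ^ 2 ≤ 1) :
    ∑ t, μ t * ∏ a ∈ T, g t a ≤ Real.sqrt ((D : ℝ) ^ (2 - T.card)) := by
  have hD0 : (0:ℝ) ≤ (D:ℝ) := by positivity
  interval_cases h : T.card
  · -- card = 0
    obtain rfl : T = ∅ := Finset.card_eq_zero.mp h
    simp only [Finset.prod_empty, mul_one, Finset.card_empty, Nat.sub_zero]
    rw [hsum, Real.sqrt_sq hD0]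
  · -- card = 1
    obtain ⟨a, rfl⟩ := Finset.card_eq_one.mp h
    simp only [Finset.prod_singleton]
    have hnn : 0 ≤ ∑ t, μ t * g t a :=
      Finset.sum_nonneg fun t _ => mul_nonneg (hμ0 t) (hg0 t a)
    rw [Real.le_sqrt hnn (by positivity)]
    calc (∑ t, μ t * g t a) ^ 2
        = (∑ t, Real.sqrt (μ t) * (Real.sqrt (μ t) * g t a)) ^ 2 := by
          congr 1; refine Finset.sum_congr rfl fun t _ => ?_
          rw [← mul_assoc, Real.mul_self_sqrt (hμ0 t)]
      _ ≤ (∑ t, Real.sqrt (μ t) ^ 2) * ∑ t, (Real.sqrt (μ t) * g t a) ^ 2 :=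
          Finset.sum_mul_sq_le_sq_mul_sq _ _ _
      _ ≤ (D : ℝ) * 1 := by
          refine mul_le_mul ?_ ?_ (Finset.sum_nonneg fun t _ => sq_nonneg _) hD0
          · rw [← hsum]; exact le_of_eq (Finset.sum_congr rfl fun t _ => Real.sq_sqrt (hμ0 t))
          · refine le_trans (le_of_eq (Finset.sum_congr rfl fun t _ => ?_)) (hquad a (by simp))
            rw [mul_pow, Real.sq_sqrt (hμ0 t)]
      _ = (D : ℝ) ^ (2 - ({a} : Finset α).card) := by norm_num
  · -- card = 2
    obtain ⟨a, b, hab, rfl⟩ := Finset.card_eq_two.mp h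
    have hmem_a : a ∈ ({a, b} : Finset α) := by simp
    have hmem_b : b ∈ ({a, b} : Finset α) := by simp
    simp only [Finset.prod_insert (by simp [hab] : a ∉ ({b} : Finset α)),
      Finset.prod_singleton]
    have hnn : 0 ≤ ∑ t, μ t * (g t a * g t b) :=
      Finset.sum_nonneg fun t _ => mul_nonneg (hμ0 t) (mul_nonneg (hg0 t a) (hg0 t b))
    have hsq : (∑ t, μ t * (g t a * g t b)) ^ 2 ≤ 1 := by
      calc (∑ t, μ t * (g t a * g t b)) ^ 2
          = (∑ t, (Real.sqrt (μ t) * g t a) * (Real.sqrt (μ t) * g t b)) ^ 2 := by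
            congr 1; refine Finset.sum_congr rfl fun t _ => ?_
            rw [show (Real.sqrt (μ t) * g t a) * (Real.sqrt (μ t) * g t b)
              = (Real.sqrt (μ t) * Real.sqrt (μ t)) * (g t a * g t b) by ring,
              Real.mul_self_sqrt (hμ0 t)]
        _ ≤ (∑ t, (Real.sqrt (μ t) * g t a) ^ 2) * ∑ t, (Real.sqrt (μ t) * g t b) ^ 2 :=
            Finset.sum_mul_sq_le_sq_mul_sq _ _ _
        _ ≤ 1 * 1 := by
            refine mul_le_mul ?_ ?_ (Finset.sum_nonneg fun t _ => sq_nonneg _) zero_le_one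
            · refine le_trans (le_of_eq (Finset.sum_congr rfl fun t _ => ?_)) (hquad a hmem_a)
              rw [mul_pow, Real.sq_sqrt (hμ0 t)]
            · refine le_trans (le_of_eq (Finset.sum_congr rfl fun t _ => ?_)) (hquad b hmem_b)
              rw [mul_pow, Real.sq_sqrt (hμ0 t)]
        _ = 1 := one_mul 1
    have h1 : ∑ t, μ t * (g t a * g t b) ≤ 1 := by nlinarith
    refine le_trans h1 ?_
    norm_num

private lemma aux_mul_conj (z : ℂ) : z * (starRingEnd ℂ) z = ((‖z‖ : ℂ))^2 :=
  RCLike.mul_conj z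

private lemma aux_povm {N Dm : ℕ} (c : Fin Dm → ℝ) (u : Fin Dm → Fin N → ℂ)
    (hu : ∀ t, (∑ x, ‖u t x‖^2 : ℝ) = 1)
    (hM : ∑ t, (c t : ℂ) • Matrix.vecMulVec (u t) (star (u t))
        = (1 : Matrix (Fin N) (Fin N) ℂ)) :
    (∑ t, c t = (N : ℝ)) ∧
    ∀ v : Fin N → ℂ, (∑ x, ‖v x‖^2 : ℝ) = 1 →
      ∑ t, c t * ‖∑ x, (starRingEnd ℂ) (v x) * u t x‖^2 = 1 := by
  have hent : ∀ x x' : Fin N,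
      ∑ t, (c t : ℂ) * (u t x * (starRingEnd ℂ) (u t x'))
        = if x = x' then 1 else 0 := by
    intro x x'
    have h := congrFun (congrFun hM x) x'
    simp only [Matrix.sum_apply, Matrix.smul_apply, Matrix.vecMulVec_apply, Pi.star_apply,
      smul_eq_mul, Matrix.one_apply] at h
    rw [← h]
    refine Finset.sum_congr rfl fun t _ => ?_
    rw [starRingEnd_apply]
  constructor
  · -- trace
    have h1 : ∑ x : Fin N, ∑ t, (c t : ℂ) * (u t x * (starRingEnd ℂ) (u t x))
        = (N : ℂ) := by
      simp [hent]
    rw [Finset.sum_comm] at h1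
    have h2 : ∀ t : Fin Dm, ∑ x, (c t : ℂ) * (u t x * (starRingEnd ℂ) (u t x))
        = (c t : ℂ) := by
      intro t
      rw [← Finset.mul_sum]
      have : ∑ x, u t x * (starRingEnd ℂ) (u t x) = 1 := by
        have h3 : ∑ x, u t x * (starRingEnd ℂ) (u t x) = ((∑ x, ‖u t x‖^2 : ℝ) : ℂ) := by
          push_cast
          exact Finset.sum_congr rfl fun x _ => aux_mul_conj _
        rw [h3, hu t, Complex.ofReal_one]
      rw [this, mul_one]
    simp_rw [h2] at h1
    exact_mod_cast h1
  · -- quadratic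
    intro v hv
    have key : ∑ t, ((c t * ‖∑ x, (starRingEnd ℂ) (v x) * u t x‖^2 : ℝ) : ℂ) = 1 := by
      have expand : ∀ t : Fin Dm,
          ((‖∑ x, (starRingEnd ℂ) (v x) * u t x‖^2 : ℝ) : ℂ)
            = ∑ x, ∑ x', ((starRingEnd ℂ) (v x) * v x') * (u t x * (starRingEnd ℂ) (u t x')) := by
        intro t
        rw [Complex.ofReal_pow, ← aux_mul_conj (∑ x, (starRingEnd ℂ) (v x) * u t x)]
        rw [map_sum, Finset.sum_mul_sum]
        refine Finset.sum_congr rfl fun x _ => Finset.sum_congr rfl fun x' _ => ?_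
        rw [_root_.map_mul, Complex.conj_conj]
        ring
      calc ∑ t, ((c t * ‖∑ x, (starRingEnd ℂ) (v x) * u t x‖^2 : ℝ) : ℂ)
          = ∑ t, (c t : ℂ) * ∑ x, ∑ x',
              ((starRingEnd ℂ) (v x) * v x') * (u t x * (starRingEnd ℂ) (u t x')) := by
            refine Finset.sum_congr rfl fun t _ => ?_
            rw [← expand t]; push_cast; ring
        _ = ∑ x, ∑ x', ((starRingEnd ℂ) (v x) * v x')
              * ∑ t, (c t : ℂ) * (u t x * (starRingEnd ℂ) (u t x')) := by
            simp_rw [Finset.mul_sum]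
            rw [Finset.sum_comm]
            refine Finset.sum_congr rfl fun x _ => ?_
            rw [Finset.sum_comm]
            refine Finset.sum_congr rfl fun x' _ => ?_
            refine Finset.sum_congr rfl fun t _ => ?_
            ring
        _ = ∑ x, (starRingEnd ℂ) (v x) * v x := by
            refine Finset.sum_congr rfl fun x _ => ?_
            rw [Finset.sum_eq_single x]
            · rw [hent x x, if_pos rfl, mul_one]
            · intro x' _ hne
              rw [hent x x', if_neg (Ne.symm hne), mul_zero]
            · intro hx; exact absurd (Finset.mem_univ x) hx
        _ = 1 := by
            have h4 : ∑ x, (starRingEnd ℂ) (v x) * v x = ((∑ x, ‖v x‖^2 : ℝ) : ℂ) := by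
              push_cast
              refine Finset.sum_congr rfl fun x _ => ?_
              rw [mul_comm]; exact aux_mul_conj _
            rw [h4, hv, Complex.ofReal_one]
    exact_mod_cast key



/-- For the adaptive measurement data `y, λ` (unit vectors and weights
satisfying the POVM completeness condition), for every fixed `s₀` and every non-identity
permutation `τ` of `{1,…,k}`, with `L_τ` the cardinality of the support of `τ`,
`∑_{s₁,…,s_k} ∏_{i=1}^k |⟨y^{τ(i)}_{s₀…s_{τ(i)}} | y^i_{s₀…s_i}⟩| · λ^i_{s₀…s_i}
  ≤ D^{k − ⌊L_τ/2⌋}`. -/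
theorem loop_decomposition_bound
    (ℓ k Dm : ℕ) (hℓ : 1 ≤ ℓ) (hk : 1 ≤ k) (hDm : 1 ≤ Dm)
    (y : Fin (k + 1) → (Fin (k + 1) → Fin Dm) → (Fin (2 ^ ℓ) → ℂ))
    (lam : Fin (k + 1) → (Fin (k + 1) → Fin Dm) → ℝ)
    (hy_unit : ∀ i s, ∑ x, ‖y i s x‖ ^ 2 = 1)
    (hlam : ∀ i s, 0 < lam i s ∧ lam i s ≤ 1)
    (hy_prefix : ∀ (i : Fin (k + 1)) (s s' : Fin (k + 1) → Fin Dm),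
      (∀ j, j ≤ i → s j = s' j) → y i s = y i s')
    (hlam_prefix : ∀ (i : Fin (k + 1)) (s s' : Fin (k + 1) → Fin Dm),
      (∀ j, j ≤ i → s j = s' j) → lam i s = lam i s')
    (hcomplete : ∀ (i : Fin (k + 1)) (s : Fin (k + 1) → Fin Dm),
      ∑ t : Fin Dm, (lam i (Function.update s i t) : ℂ) •
          Matrix.vecMulVec (y i (Function.update s i t)) (star (y i (Function.update s i t)))
        = (1 : Matrix (Fin (2 ^ ℓ)) (Fin (2 ^ ℓ)) ℂ)) :
    ∀ (s₀ : Fin Dm) (τ : Equiv.Perm (Fin k)), τ ≠ 1 →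
      ∑ s' : Fin k → Fin Dm,
        ∏ i : Fin k,
          (‖∑ x, (starRingEnd ℂ) (y (τ i).succ (Fin.cons s₀ s') x) *
              y i.succ (Fin.cons s₀ s') x‖ * lam i.succ (Fin.cons s₀ s'))
        ≤ ((2 : ℝ) ^ ℓ) ^ (k - τ.support.card / 2) := by
  intro s₀ τ _
  classical
  have hDnat : 1 ≤ 2 ^ ℓ := Nat.one_le_two_pow
  have hDr : ((2 ^ ℓ : ℕ) : ℝ) = (2 : ℝ) ^ ℓ := by push_cast; ring
  have hDr0 : (0 : ℝ) ≤ ((2 ^ ℓ : ℕ) : ℝ) := by positivity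
  have hDr1 : (1 : ℝ) ≤ ((2 ^ ℓ : ℕ) : ℝ) := by exact_mod_cast hDnat
  -- norm symmetry of the inner product
  have hsym : ∀ (a b : Fin (k+1)) (σ : Fin (k+1) → Fin Dm),
      ‖∑ x, (starRingEnd ℂ) (y a σ x) * y b σ x‖
        = ‖∑ x, (starRingEnd ℂ) (y b σ x) * y a σ x‖ := by
    intro a b σ
    have h : ∑ x, (starRingEnd ℂ) (y a σ x) * y b σ x
        = (starRingEnd ℂ) (∑ x, (starRingEnd ℂ) (y b σ x) * y a σ x) := by
      rw [map_sum]
      refine Finset.sum_congr rfl fun x _ => ?_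
      rw [_root_.map_mul, Complex.conj_conj]
      ring
    rw [h, RCLike.norm_conj]
  -- self inner product has norm 1
  have hunit_ip : ∀ (a : Fin (k+1)) (σ : Fin (k+1) → Fin Dm),
      ‖∑ x, (starRingEnd ℂ) (y a σ x) * y a σ x‖ = 1 := by
    intro a σ
    have h : ∑ x, (starRingEnd ℂ) (y a σ x) * y a σ x
        = ((∑ x, ‖y a σ x‖ ^ 2 : ℝ) : ℂ) := by
      push_cast
      refine Finset.sum_congr rfl fun x _ => ?_
      rw [mul_comm]
      exact aux_mul_conj _
    rw [h, hy_unit a σ]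
    simp
  -- the fibers
  set T : Fin k → Finset (Fin k) :=
    (fun i => τ.support.filter (fun a => max a (τ a) = i)) with hT
  have hTcard : ∀ i, (T i).card ≤ 2 := by
    intro i
    have hsub : T i ⊆ {i, τ⁻¹ i} := by
      intro a ha
      rw [hT] at ha
      simp only [Finset.mem_filter] at ha
      obtain ⟨hsupp, hmax⟩ := ha
      rcases max_cases a (τ a) with ⟨h1, _⟩ | ⟨h1, _⟩
      · simp [h1 ▸ hmax]
      · have : τ a = i := h1 ▸ hmax
        have : a = τ⁻¹ i := by rw [← this]; simp
        simp [this]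
    exact le_trans (Finset.card_le_card hsub)
      (le_trans (Finset.card_insert_le _ _) (by simp))
  have hTsum : ∑ i : Fin k, (T i).card = τ.support.card := by
    rw [hT]
    exact (Finset.card_eq_sum_card_fiberwise
      (fun a _ => Finset.mem_univ (max a (τ a)))).symm
  have hmin_lt : ∀ i : Fin k, ∀ a ∈ T i, min a (τ a) < i := by
    intro i a ha
    rw [hT] at ha
    simp only [Finset.mem_filter] at ha
    obtain ⟨hsupp, hmax⟩ := ha
    have hne : a ≠ τ a := fun h => (Equiv.Perm.mem_support.1 hsupp) h.symm
    calc min a (τ a) < max a (τ a) := min_lt_max.2 hne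
      _ = i := hmax
  -- the factors
  set F : Fin k → (Fin k → Fin Dm) → ℝ :=
    (fun i s' => lam i.succ (Fin.cons s₀ s') *
      ∏ a ∈ T i, ‖∑ x, (starRingEnd ℂ) (y (min a (τ a)).succ (Fin.cons s₀ s') x) *
          y i.succ (Fin.cons s₀ s') x‖) with hF
  set B : Fin k → ℝ :=
    (fun i => Real.sqrt (((2 ^ ℓ : ℕ) : ℝ) ^ (2 - (T i).card))) with hB
  -- Step 1: rewrite the summand
  have hEq : ∀ s' : Fin k → Fin Dm,
      ∏ i : Fin k,
        (‖∑ x, (starRingEnd ℂ) (y (τ i).succ (Fin.cons s₀ s') x) *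
            y i.succ (Fin.cons s₀ s') x‖ * lam i.succ (Fin.cons s₀ s'))
      = ∏ i, F i s' := by
    intro s'
    set σ : Fin (k+1) → Fin Dm := Fin.cons s₀ s' with hσ
    rw [Finset.prod_mul_distrib]
    have hFd : ∏ i, F i s'
        = (∏ i : Fin k, lam i.succ σ) *
          ∏ i : Fin k, ∏ a ∈ T i,
            ‖∑ x, (starRingEnd ℂ) (y (min a (τ a)).succ σ x) * y i.succ σ x‖ := by
      rw [hF, Finset.prod_mul_distrib]
    rw [hFd]
    rw [mul_comm ((∏ i : Fin k, lam i.succ σ)) _]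
    congr 1
    -- the inner-product product identity
    have step1 : ∏ i : Fin k, ∏ a ∈ T i,
          ‖∑ x, (starRingEnd ℂ) (y (min a (τ a)).succ σ x) * y i.succ σ x‖
        = ∏ i : Fin k, ∏ a ∈ T i,
          ‖∑ x, (starRingEnd ℂ) (y (min a (τ a)).succ σ x) * y (max a (τ a)).succ σ x‖ := by
      refine Finset.prod_congr rfl fun i _ => Finset.prod_congr rfl fun a ha => ?_
      rw [hT] at ha
      simp only [Finset.mem_filter] at ha
      rw [ha.2]
    rw [step1,
      Finset.prod_fiberwise_of_maps_to (fun a _ => Finset.mem_univ (max a (τ a)))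
        (fun a => ‖∑ x, (starRingEnd ℂ) (y (min a (τ a)).succ σ x)
            * y (max a (τ a)).succ σ x‖)]
    have step2 : ∏ a ∈ τ.support,
        ‖∑ x, (starRingEnd ℂ) (y (min a (τ a)).succ σ x) * y (max a (τ a)).succ σ x‖
        = ∏ a ∈ τ.support,
          ‖∑ x, (starRingEnd ℂ) (y (τ a).succ σ x) * y a.succ σ x‖ := by
      refine Finset.prod_congr rfl fun a ha => ?_
      have hne : a ≠ τ a := fun h => (Equiv.Perm.mem_support.1 ha) h.symm
      rcases le_or_gt a (τ a) with h | h
      · rw [min_eq_left h, max_eq_right h]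
        exact hsym _ _ σ
      · rw [min_eq_right h.le, max_eq_left h.le]
    rw [step2]
    refine (Finset.prod_subset (Finset.subset_univ _) fun i _ hi => ?_).symm
    have : τ i = i := Equiv.Perm.notMem_support.1 hi
    rw [this]
    exact hunit_ip i.succ σ
  -- Step 2: apply the master inequality
  have hmain : ∑ s' : Fin k → Fin Dm, ∏ i, F i s' ≤ ∏ i, B i := by
    refine aux_sum_prod_le (Nat.lt_of_lt_of_le Nat.zero_lt_one hDm) k F B ?_ ?_ ?_
    · intro i s'
      exact mul_nonneg (hlam _ _).1.le (Finset.prod_nonneg fun a _ => norm_nonneg _)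
    · -- dependence on the prefix
      intro i s' s'' hag
      have hσ : ∀ j : Fin (k+1), j ≤ i.succ →
          (Fin.cons s₀ s' : Fin (k+1) → Fin Dm) j
            = (Fin.cons s₀ s'' : Fin (k+1) → Fin Dm) j := by
        intro j hj
        induction j using Fin.cases with
        | zero => simp
        | succ j' =>
          simp only [Fin.cons_succ]
          exact hag j' (Fin.succ_le_succ_iff.1 hj)
      rw [hF]
      simp only
      rw [hlam_prefix i.succ _ _ hσ]
      congr 1
      refine Finset.prod_congr rfl fun a ha => ?_
      have h1 : y (min a (τ a)).succ (Fin.cons s₀ s') = y (min a (τ a)).succ (Fin.cons s₀ s'') :=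
        hy_prefix _ _ _ fun j hj => hσ j
          (le_trans hj (Fin.succ_le_succ_iff.2 (hmin_lt i a ha).le))
      have h2 : y i.succ (Fin.cons s₀ s') = y i.succ (Fin.cons s₀ s'') :=
        hy_prefix _ _ _ fun j hj => hσ j hj
      rw [h1, h2]
    · -- the step bound
      intro i s'
      set σ0 : Fin (k+1) → Fin Dm := Fin.cons s₀ s' with hσ0
      have hcu : ∀ t, Fin.cons s₀ (Function.update s' i t) = Function.update σ0 i.succ t := by
        intro t
        rw [hσ0]
        exact Fin.cons_update (α := fun _ : Fin (k+1) => Fin Dm) s₀ s' i t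
      have hpovm := aux_povm (fun t => lam i.succ (Function.update σ0 i.succ t))
        (fun t => y i.succ (Function.update σ0 i.succ t))
        (fun t => hy_unit i.succ (Function.update σ0 i.succ t))
        (hcomplete i.succ σ0)
      have hFt : ∀ t, F i (Function.update s' i t)
          = lam i.succ (Function.update σ0 i.succ t) *
            ∏ a ∈ T i, ‖∑ x, (starRingEnd ℂ) (y (min a (τ a)).succ σ0 x) *
              y i.succ (Function.update σ0 i.succ t) x‖ := by
        intro t
        rw [hF]
        simp only
        rw [hcu t]
        congr 1
        refine Finset.prod_congr rfl fun a ha => ?_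
        have : y (min a (τ a)).succ (Function.update σ0 i.succ t)
            = y (min a (τ a)).succ σ0 := by
          refine hy_prefix _ _ _ fun j hj => ?_
          have hne : j ≠ i.succ := by
            intro hje
            rw [hje] at hj
            exact absurd (lt_of_le_of_lt hj (Fin.succ_lt_succ_iff.2 (hmin_lt i a ha)))
              (lt_irrefl _)
          exact Function.update_of_ne hne t σ0
        rw [this]
      simp_rw [hFt]
      rw [hB]
      exact aux_step_bound hDnat
        (fun t => lam i.succ (Function.update σ0 i.succ t))
        (fun t => (hlam _ _).1.le)
        (fun t a => ‖∑ x, (starRingEnd ℂ) (y (min a (τ a)).succ σ0 x) *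
          y i.succ (Function.update σ0 i.succ t) x‖)
        (fun t a => norm_nonneg _)
        hpovm.1 (T i) (hTcard i)
        (fun a _ => le_of_eq (hpovm.2 (y (min a (τ a)).succ σ0)
          (hy_unit (min a (τ a)).succ σ0)))
  -- Step 3: numerics
  have hLk : τ.support.card ≤ k := by
    calc τ.support.card ≤ Fintype.card (Fin k) := Finset.card_le_univ _
      _ = k := Fintype.card_fin k
  have hBprod : ∏ i, B i ≤ ((2 : ℝ) ^ ℓ) ^ (k - τ.support.card / 2) := by
    rw [hB]
    rw [aux_prod_sqrt Finset.univ _ (fun i _ => by positivity)]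
    rw [Finset.prod_pow_eq_pow_sum]
    have hexp : ∑ i : Fin k, (2 - (T i).card) = 2 * k - τ.support.card := by
      have h1 : ∑ i : Fin k, ((2 - (T i).card) + (T i).card) = 2 * k := by
        have h2 : ∀ i : Fin k, (2 - (T i).card) + (T i).card = 2 := by
          intro i; have := hTcard i; omega
        simp_rw [h2]
        simp [Finset.card_univ, mul_comm]
      rw [Finset.sum_add_distrib, hTsum] at h1
      omega
    rw [hexp]
    have hexp2 : 2 * k - τ.support.card ≤ 2 * (k - τ.support.card / 2) := by omega
    calc Real.sqrt (((2 ^ ℓ : ℕ) : ℝ) ^ (2 * k - τ.support.card))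
        ≤ Real.sqrt (((2 ^ ℓ : ℕ) : ℝ) ^ (2 * (k - τ.support.card / 2))) :=
          Real.sqrt_le_sqrt (pow_le_pow_right₀ hDr1 hexp2)
      _ = ((2 : ℝ) ^ ℓ) ^ (k - τ.support.card / 2) := by
          rw [mul_comm 2 (k - τ.support.card / 2), pow_mul,
            Real.sqrt_sq (pow_nonneg hDr0 _), hDr]
  calc ∑ s' : Fin k → Fin Dm,
      ∏ i : Fin k,
        (‖∑ x, (starRingEnd ℂ) (y (τ i).succ (Fin.cons s₀ s') x) *
            y i.succ (Fin.cons s₀ s') x‖ * lam i.succ (Fin.cons s₀ s'))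
      = ∑ s' : Fin k → Fin Dm, ∏ i, F i s' := Finset.sum_congr rfl fun s' _ => hEq s'
    _ ≤ ∏ i, B i := hmain
    _ ≤ ((2 : ℝ) ^ ℓ) ^ (k - τ.support.card / 2) := hBprod
end

section
/- There exists a universal constant C > 0 such that for all integers k ≥ 1 and all integers D > √6 · k^{7/4}, the Gram matrix G_D is invertible and the unitary Weingarten function at the identity permutation satisfies |Wg^U(id, D) − D^{−k}| ≤ C · k^{7/2} · D^{−(k+2)}. -/
open Matrix

/-- The number of cycles of a permutation, counting fixed points as (trivial) cycles. -/
def numCycles {k : ℕ} (σ : Equiv.Perm (Fin k)) : ℕ :=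
  Multiset.card σ.cycleType + (k - σ.support.card)

/-- The Gram matrix `G_D(σ,τ) = D^{#(σ⁻¹τ)}` on permutations of `{1,…,k}`. -/
def permGram (k D : ℕ) : Matrix (Equiv.Perm (Fin k)) (Equiv.Perm (Fin k)) ℝ :=
  fun σ τ => (D : ℝ) ^ numCycles (σ⁻¹ * τ)

/-!
Write `S_m ≤ S_k` for the permutations fixing every `t ≥ m` (`fixingFrom k m`) and
`J_i = ∑_{j<i} (j i)` for the Jucys–Murphy elements, acting on `ℝ[S_k]` by right
multiplication. If `G⁽ᵐ⁾` denotes the Gram matrix restricted to `S_m` (`partialGram`), then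
`G⁽ᵐ⁾ (1 + J_m / D) = G⁽ᵐ⁺¹⁾`: a permutation of `S_{m+1}` moving `m` is brought into `S_m` by
exactly one transposition `(j m)`, `j < m`, and that transposition splits one of its cycles.
Since `G⁽⁰⁾ = D^k` and each factor is strictly diagonally dominant (`J_i` has row sums `i < D`),
`D^k G_D⁻¹ = B_{k-1} ⋯ B_0` with `B_i = (1 + J_i / D)⁻¹`.

All these matrices are left-invariant, hence determined by their row at the identity, and
`B_{m-1} ⋯ B_0` is supported on `S_m`; so multiplying it by `B_m` feels `B_m - 1` only through
its values on a fibre `{π | π m = t}`. From `B = 1 - D⁻¹ J B`, the ℓ¹-mass `R t` of the row of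
`B_m - 1` on that fibre (`rowMass`) satisfies `D R t ≤ [t < m] + ∑_{j<m} R ((j m) t)`; at a
maximiser this gives `R ≤ 1 / (D - m)`, and then `R m ≤ m / (D (D - m)) ≤ 2k / D²` once
`D ≥ 2k`. Inductively the row entries stay below `(1 + 2k/D²)^m` and the identity entry within
`(1 + 2k/D²)^m - 1` of `1`, so `|D^k Wg(id) - 1| ≤ 4k² / D²`.
-/

open Equiv Equiv.Perm Finset

section CycleCount

variable {k : ℕ}

lemma numCycles_one : numCycles (1 : Perm (Fin k)) = k := by
  simp [numCycles]

lemma numCycles_mul_of_isCycle {y c : Perm (Fin k)} (hyc : y.Disjoint c) (hc : c.IsCycle) :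
    numCycles (y * c) + #c.support = numCycles y + 1 := by
  have hcard : #y.support + #c.support ≤ k := by
    rw [← hyc.card_support_mul]
    simpa using card_le_univ (y * c).support
  simp only [numCycles, hyc.cycleType_mul, Multiset.card_add, hc.cycleType,
    hyc.card_support_mul, Multiset.card_singleton]
  omega

lemma numCycles_mul_swap {x : Perm (Fin k)} {j i : Fin k} (hji : j ≠ i) (hx : x j = i) :
    numCycles (x * swap j i) = numCycles x + 1 := by
  by_cases hxi : x i = j
  · -- `(j i)` is itself one of the cycles of `x`
    have hdisj : (x * swap j i).Disjoint (swap j i) := by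
      intro a
      by_cases ha : a = j ∨ a = i
      · rcases ha with rfl | rfl <;> simp [hx, hxi]
      · exact Or.inr (swap_apply_of_ne_of_ne (fun h => ha (.inl h)) (fun h => ha (.inr h)))
    have h := numCycles_mul_of_isCycle hdisj (isCycle_swap hji)
    rw [mul_swap_mul_self, card_support_swap hji] at h
    omega
  · set c := x.cycleOf j
    have hxj : x j ≠ j := hx ▸ hji.symm
    have hxi' : x i ≠ i := fun h => hji (x.injective (hx.trans h.symm))
    have hc : c.IsCycle := isCycle_cycleOf x hxj
    have hzc : (x * c⁻¹).Disjoint c := disjoint_mul_inv_of_mem_cycleFactorsFinset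
      (cycleOf_mem_cycleFactorsFinset_iff.2 (mem_support.2 hxj))
    have hci : c i = x i := by
      rw [cycleOf_apply, if_pos ⟨1, by simpa using hx⟩]
    have hcci : c (c i) ≠ i := by
      rw [hci, cycleOf_apply, if_pos ⟨2, by simp [sq, hx]⟩]
      exact fun h => hxi (x.injective (h.trans hx.symm))
    -- multiplying by `(j i)` cuts `i` out of the cycle `c` of `x` through `j`
    have hcut : c * swap j i = swap i (c i) * c := by
      rw [mul_swap_eq_swap_mul, cycleOf_apply_self, hx]
    have hcut_support : (c * swap j i).support = c.support \ {i} := by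
      rw [hcut, support_swap_mul_eq c i hcci]
    have hi : i ∈ c.support := mem_support.2 (hci ▸ hxi')
    have h1 := numCycles_mul_of_isCycle hzc hc
    have h2 := numCycles_mul_of_isCycle
      (hzc.mono le_rfl (by rw [hcut_support]; exact sdiff_subset))
      (hcut ▸ hc.swap_mul (hci ▸ hxi') hcci)
    rw [inv_mul_cancel_right] at h1
    rw [← mul_assoc, inv_mul_cancel_right, hcut_support, sdiff_singleton_eq_erase,
      card_erase_of_mem hi] at h2
    have := card_pos.2 ⟨i, hi⟩
    omega

end CycleCount

section FixingFrom

variable {k : ℕ}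

def fixingFrom (k m : ℕ) : Subgroup (Perm (Fin k)) :=
  fixingSubgroup (Perm (Fin k)) {t : Fin k | m ≤ (t : ℕ)}

lemma mem_fixingFrom {m : ℕ} {x : Perm (Fin k)} :
    x ∈ fixingFrom k m ↔ ∀ t : Fin k, m ≤ t → x t = t := by
  simp [fixingFrom, mem_fixingSubgroup_iff, Perm.smul_def]

lemma fixingFrom_zero : fixingFrom k 0 = ⊥ := by
  ext x
  simp [mem_fixingFrom, Subgroup.mem_bot, Perm.ext_iff]

lemma fixingFrom_self : fixingFrom k k = ⊤ := by
  ext x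
  simp only [mem_fixingFrom, Subgroup.mem_top, iff_true]
  exact fun t ht => absurd t.isLt (not_lt.2 ht)

lemma fixingFrom_mono : Monotone (fixingFrom k) :=
  fun _ _ hmn _ hx => mem_fixingFrom.2 fun t ht => mem_fixingFrom.1 hx t (hmn.trans ht)

lemma swap_mem_fixingFrom {j i : Fin k} (hj : j < i) : swap j i ∈ fixingFrom k (i + 1) :=
  mem_fixingFrom.2 fun t ht => swap_apply_of_ne_of_ne (by omega) (by omega)

lemma mem_fixingFrom_iff_apply_self {x : Perm (Fin k)} (i : Fin k) :
    x ∈ fixingFrom k i ↔ x ∈ fixingFrom k (i + 1) ∧ x i = i := by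
  simp only [mem_fixingFrom]
  refine ⟨fun h => ⟨fun t ht => h t (by omega), h i le_rfl⟩, fun ⟨h, hi⟩ t ht => ?_⟩
  rcases (Nat.le_iff_lt_or_eq.1 ht) with ht | ht
  · exact h t ht
  · rwa [Fin.ext ht.symm]

lemma mul_swap_mem_fixingFrom_iff {x : Perm (Fin k)} {j i : Fin k} (hj : j < i) :
    x * swap j i ∈ fixingFrom k i ↔ x ∈ fixingFrom k (i + 1) ∧ x j = i := by
  rw [mem_fixingFrom_iff_apply_self i, mul_apply, swap_apply_right]
  refine and_congr_left fun _ => ⟨fun h => ?_, fun h => mul_mem h (swap_mem_fixingFrom hj)⟩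
  simpa using mul_mem h (swap_mem_fixingFrom hj)

lemma inv_apply_lt_iff_of_mem_fixingFrom {x : Perm (Fin k)} {i : Fin k}
    (hx : x ∈ fixingFrom k (i + 1)) :
    x⁻¹ i < i ↔ x i ≠ i := by
  have hfix : x⁻¹ i = i ↔ x i = i := by
    rw [inv_eq_iff_eq, eq_comm]
  refine ⟨fun h => (hfix.not.1 h.ne), fun h => lt_of_le_of_ne ?_ (hfix.not.2 h)⟩
  by_contra hlt
  have := mem_fixingFrom.1 hx (x⁻¹ i) (by simp only [not_le, Fin.lt_def] at hlt; omega)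
  exact hlt ((x.apply_symm_apply i).symm.trans this).ge

end FixingFrom

section GroupMatrix

variable (R G : Type*) [CommRing R] [Group G] [Fintype G] [DecidableEq G]

def leftInvariant : Subalgebra R (Matrix G G R) where
  carrier := {X | ∀ ρ : G, X.submatrix (Equiv.mulLeft ρ) (Equiv.mulLeft ρ) = X}
  mul_mem' {X Y} hX hY ρ := by
    rw [← submatrix_mul_equiv X Y _ (Equiv.mulLeft ρ) _, hX ρ, hY ρ]
  add_mem' {X Y} hX hY ρ := by
    conv_rhs => rw [← hX ρ, ← hY ρ]
    rfl
  algebraMap_mem' r ρ := by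
    ext σ τ
    simp [Algebra.algebraMap_eq_smul_one, Matrix.one_apply]

def cosetBlock (H : Subgroup G) : Subalgebra R (Matrix G G R) where
  carrier := {X | ∀ σ τ, σ⁻¹ * τ ∉ H → X σ τ = 0}
  mul_mem' {X Y} hX hY σ τ hστ := by
    rw [Matrix.mul_apply]
    refine Finset.sum_eq_zero fun μ _ => ?_
    by_cases hσμ : σ⁻¹ * μ ∈ H
    · rw [hY μ τ fun hμτ => hστ (by simpa [mul_assoc] using mul_mem hσμ hμτ), mul_zero]
    · rw [hX σ μ hσμ, zero_mul]
  add_mem' {X Y} hX hY σ τ hστ := by simp [hX σ τ hστ, hY σ τ hστ]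
  algebraMap_mem' r σ τ hστ := by
    rw [algebraMap_eq_diagonal, diagonal_apply_ne]
    rintro rfl
    simp at hστ

variable {R G}

lemma cosetBlock_mono : Monotone (cosetBlock R G) :=
  fun _ _ hHK _ hX σ τ hστ => hX σ τ fun h => hστ (hHK h)

lemma apply_eq_one_apply {X : Matrix G G R} (hX : X ∈ leftInvariant R G) (σ τ : G) :
    X σ τ = X 1 (σ⁻¹ * τ) := by
  simpa using (congrFun₂ (hX σ⁻¹) σ τ).symm

lemma mul_apply_one {X Y : Matrix G G R} (hY : Y ∈ leftInvariant R G) (x : G) :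
    (X * Y) 1 x = ∑ π, X 1 π * Y 1 (π⁻¹ * x) := by
  simp only [Matrix.mul_apply, apply_eq_one_apply hY _ x]

lemma inv_mem_leftInvariant {X : Matrix G G R} (hX : X ∈ leftInvariant R G) :
    X⁻¹ ∈ leftInvariant R G :=
  fun ρ => by rw [← inv_submatrix_equiv, hX ρ]

lemma inv_mem_cosetBlock {H : Subgroup G} {X : Matrix G G R} (hX : X ∈ cosetBlock R G H) :
    X⁻¹ ∈ cosetBlock R G H := by
  classical
  by_cases hdet : IsUnit X.det
  swap
  · rw [nonsing_inv_apply_not_isUnit X hdet]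
    exact zero_mem _
  -- restricting `X⁻¹` to the blocks gives another right inverse of `X`
  set Y : Matrix G G R :=
    Matrix.of fun σ τ => if σ⁻¹ * τ ∈ H then X⁻¹ σ τ else 0 with hYdef
  have hsame : ∀ σ μ τ : G, σ⁻¹ * μ ∈ H → (μ⁻¹ * τ ∈ H ↔ σ⁻¹ * τ ∈ H) :=
    fun σ μ τ h => by
      rw [← H.mul_mem_cancel_left h]
      simp [mul_assoc]
  have hXY : X * Y = 1 := by
    ext σ τ
    have : (X * Y) σ τ = if σ⁻¹ * τ ∈ H then (X * X⁻¹) σ τ else 0 := by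
      simp only [Matrix.mul_apply, hYdef, of_apply]
      split_ifs with hστ
      · refine Finset.sum_congr rfl fun μ _ => ?_
        by_cases hσμ : σ⁻¹ * μ ∈ H
        · rw [if_pos ((hsame σ μ τ hσμ).2 hστ)]
        · rw [hX σ μ hσμ, zero_mul, zero_mul]
      · refine Finset.sum_eq_zero fun μ _ => ?_
        by_cases hσμ : σ⁻¹ * μ ∈ H
        · rw [if_neg (fun h => hστ ((hsame σ μ τ hσμ).1 h)), mul_zero]
        · rw [hX σ μ hσμ, zero_mul]
    rw [this, mul_nonsing_inv X hdet]
    split_ifs with hστ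
    · rfl
    · rw [one_apply_ne]
      rintro rfl
      simp at hστ
  rw [inv_eq_right_inv hXY]
  intro σ τ hστ
  simp [hYdef, hστ]

lemma toMatrix_mulRight_mem_leftInvariant (g : G) :
    (Equiv.mulRight g).toPEquiv.toMatrix ∈ leftInvariant R G := fun ρ => by
  ext σ τ
  simp [PEquiv.toMatrix_apply, mul_assoc]

lemma toMatrix_mulRight_mem_cosetBlock {H : Subgroup G} {g : G} (hg : g ∈ H) :
    (Equiv.mulRight g).toPEquiv.toMatrix ∈ cosetBlock R G H := fun σ τ hστ => by
  rw [PEquiv.toMatrix_apply, if_neg]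
  rintro h
  simp only [Option.mem_def, Equiv.toPEquiv_apply, Option.some.injEq, Equiv.coe_mulRight] at h
  exact hστ (by simpa [← h] using hg)

end GroupMatrix

section JucysMurphy

variable {k : ℕ}

instance (k m : ℕ) (x : Perm (Fin k)) : Decidable (x ∈ fixingFrom k m) :=
  decidable_of_iff _ mem_fixingFrom.symm

def jucysMurphy (k : ℕ) (i : Fin k) : Matrix (Perm (Fin k)) (Perm (Fin k)) ℝ :=
  ∑ j ∈ Iio i, (Equiv.mulRight (swap j i)).toPEquiv.toMatrix

lemma jucysMurphy_apply (i : Fin k) (σ τ : Perm (Fin k)) :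
    jucysMurphy k i σ τ = ∑ j ∈ Iio i, if σ * swap j i = τ then 1 else 0 := by
  simp [jucysMurphy, Matrix.sum_apply, PEquiv.toMatrix_apply]

lemma jucysMurphy_nonneg (i : Fin k) (σ τ : Perm (Fin k)) : 0 ≤ jucysMurphy k i σ τ := by
  rw [jucysMurphy_apply]
  exact sum_nonneg fun _ _ => by split_ifs <;> norm_num

lemma jucysMurphy_apply_self (i : Fin k) (σ : Perm (Fin k)) : jucysMurphy k i σ σ = 0 := by
  rw [jucysMurphy_apply]
  refine sum_eq_zero fun j hj => if_neg fun h => ?_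
  exact (mem_Iio.1 hj).ne (swap_eq_one_iff.1 (mul_eq_left.1 h))

lemma sum_jucysMurphy_apply (i : Fin k) (σ : Perm (Fin k)) :
    ∑ τ, jucysMurphy k i σ τ = i := by
  simp_rw [jucysMurphy_apply]
  rw [sum_comm]
  simp

lemma mul_jucysMurphy_apply (X : Matrix (Perm (Fin k)) (Perm (Fin k)) ℝ) (i : Fin k)
    (σ τ : Perm (Fin k)) :
    (X * jucysMurphy k i) σ τ = ∑ j ∈ Iio i, X σ (τ * swap j i) := by
  simp [jucysMurphy, Matrix.mul_sum, Matrix.sum_apply, PEquiv.mul_toMatrix_toPEquiv]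

lemma jucysMurphy_mul_apply (X : Matrix (Perm (Fin k)) (Perm (Fin k)) ℝ) (i : Fin k)
    (σ τ : Perm (Fin k)) :
    (jucysMurphy k i * X) σ τ = ∑ j ∈ Iio i, X (σ * swap j i) τ := by
  simp [jucysMurphy, Matrix.sum_mul, Matrix.sum_apply, PEquiv.toMatrix_toPEquiv_mul]

lemma jucysMurphy_mem_leftInvariant (i : Fin k) :
    jucysMurphy k i ∈ leftInvariant ℝ (Perm (Fin k)) :=
  Subalgebra.sum_mem _ fun _ _ => toMatrix_mulRight_mem_leftInvariant _

lemma jucysMurphy_mem_cosetBlock (i : Fin k) :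
    jucysMurphy k i ∈ cosetBlock ℝ (Perm (Fin k)) (fixingFrom k (i + 1)) :=
  Subalgebra.sum_mem _ fun _ hj =>
    toMatrix_mulRight_mem_cosetBlock (swap_mem_fixingFrom (mem_Iio.1 hj))

lemma sum_Iio_ite_mul_swap_mem_fixingFrom {R : Type*} [Semiring R] (c : R) (x : Perm (Fin k))
    (i : Fin k) :
    ∑ j ∈ Iio i, (if x * swap j i ∈ fixingFrom k i then c ^ numCycles (x * swap j i) else 0)
      = if x ∈ fixingFrom k (i + 1) ∧ x i ≠ i then c ^ (numCycles x + 1) else 0 := by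
  have hterm : ∀ j ∈ Iio i,
      (if x * swap j i ∈ fixingFrom k i then c ^ numCycles (x * swap j i) else 0)
        = if j = x⁻¹ i then (if x ∈ fixingFrom k (i + 1) then c ^ (numCycles x + 1) else 0)
          else 0 := by
    intro j hj
    simp only [mul_swap_mem_fixingFrom_iff (mem_Iio.1 hj), Perm.eq_inv_iff_eq]
    by_cases hxj : x j = i
    · simp only [hxj, and_true, if_true, numCycles_mul_swap (mem_Iio.1 hj).ne hxj]
    · simp [hxj]
  rw [sum_congr rfl hterm, sum_ite_eq']
  simp only [mem_Iio]
  by_cases hx : x ∈ fixingFrom k (i + 1)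
  · simp only [hx, true_and, if_true, inv_apply_lt_iff_of_mem_fixingFrom hx, ite_not]
  · simp [hx]

noncomputable def jucysMurphyFactor (k D : ℕ) (i : Fin k) :
    Matrix (Perm (Fin k)) (Perm (Fin k)) ℝ :=
  1 + (D : ℝ)⁻¹ • jucysMurphy k i

def partialGram (k D m : ℕ) : Matrix (Perm (Fin k)) (Perm (Fin k)) ℝ :=
  Matrix.of fun σ τ =>
    if σ⁻¹ * τ ∈ fixingFrom k m then (D : ℝ) ^ numCycles (σ⁻¹ * τ) else 0

lemma partialGram_zero (D : ℕ) : partialGram k D 0 = (D : ℝ) ^ k • 1 := by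
  ext σ τ
  by_cases h : σ = τ
  · simp [h, partialGram, numCycles_one]
  · simp [h, partialGram, fixingFrom_zero, inv_mul_eq_one]

lemma partialGram_self (D : ℕ) : partialGram k D k = permGram k D := by
  ext σ τ
  simp [partialGram, permGram, fixingFrom_self]

lemma partialGram_mul_jucysMurphyFactor {D : ℕ} (hD : D ≠ 0) (i : Fin k) :
    partialGram k D i * jucysMurphyFactor k D i = partialGram k D (i + 1) := by
  ext σ τ
  rw [jucysMurphyFactor, Matrix.mul_add, Matrix.mul_one, Matrix.mul_smul, Matrix.add_apply,
    Matrix.smul_apply, mul_jucysMurphy_apply]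
  simp only [partialGram, of_apply, ← mul_assoc, smul_eq_mul]
  rw [sum_Iio_ite_mul_swap_mem_fixingFrom]
  simp only [mem_fixingFrom_iff_apply_self i]
  generalize σ⁻¹ * τ = x
  by_cases hx : x ∈ fixingFrom k (i + 1)
  · by_cases hxi : x i = i
    · simp [hx, hxi]
    · have hD' : (D : ℝ) ≠ 0 := Nat.cast_ne_zero.2 hD
      simp only [hx, hxi, and_false, if_false, ne_eq, not_false_eq_true, and_self, if_true,
        zero_add, pow_succ]
      field_simp
  · simp [hx]

end JucysMurphy

section RowMass

variable {α : Type*} [Fintype α] [DecidableEq α]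

def rowMass (X : Matrix (Perm α) (Perm α) ℝ) (a b : α) : ℝ :=
  ∑ π with π a = b, |X 1 π|

lemma rowMass_one (a b : α) : rowMass 1 a b = if a = b then 1 else 0 := by
  simp [rowMass, Matrix.one_apply, apply_ite]

lemma rowMass_add_le (X Y : Matrix (Perm α) (Perm α) ℝ) (a b : α) :
    rowMass (X + Y) a b ≤ rowMass X a b + rowMass Y a b := by
  rw [rowMass, rowMass, rowMass, ← sum_add_distrib]
  exact sum_le_sum fun π _ => abs_add_le _ _

lemma abs_mul_apply_one_le {X Y : Matrix (Perm α) (Perm α) ℝ}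
    (hY : Y ∈ leftInvariant ℝ (Perm α)) {a : α}
    (hYa : ∀ y : Perm α, y a ≠ a → Y 1 y = 0) {M : ℝ} (hM : ∀ y, |Y 1 y| ≤ M) (x : Perm α) :
    |(X * Y) 1 x| ≤ M * rowMass X a (x a) := by
  have hfib : ∀ π ∈ univ, X 1 π * Y 1 (π⁻¹ * x) ≠ 0 → π a = x a := fun π _ h => by
    by_contra hπ
    refine h (mul_eq_zero_of_right _ (hYa _ ?_))
    rw [Perm.mul_apply, Ne, Perm.inv_eq_iff_eq]
    exact Ne.symm hπ
  rw [mul_apply_one hY, ← sum_filter_of_ne hfib, rowMass, mul_sum]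
  refine (abs_sum_le_sum_abs _ _).trans (sum_le_sum fun π _ => ?_)
  rw [abs_mul, mul_comm]
  exact mul_le_mul_of_nonneg_right (hM _) (abs_nonneg _)

end RowMass

section JucysMurphyFactorInverse

variable {k D : ℕ}

lemma isUnit_det_jucysMurphyFactor {i : Fin k} (hiD : (i : ℕ) < D) :
    IsUnit (jucysMurphyFactor k D i).det := by
  refine isUnit_iff_ne_zero.2 (det_ne_zero_of_sum_row_lt_diag fun σ => ?_)
  have hoff : ∀ τ ∈ univ.erase σ,
      ‖jucysMurphyFactor k D i σ τ‖ = (D : ℝ)⁻¹ * jucysMurphy k i σ τ := fun τ hτ => by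
    rw [jucysMurphyFactor, Matrix.add_apply, Matrix.one_apply_ne (ne_of_mem_erase hτ).symm,
      zero_add, Matrix.smul_apply, smul_eq_mul, Real.norm_eq_abs,
      abs_of_nonneg (mul_nonneg (by positivity) (jucysMurphy_nonneg i σ τ))]
  have hD : (i : ℝ) < D := by exact_mod_cast hiD
  rw [sum_congr rfl hoff, ← mul_sum, sum_erase _ (jucysMurphy_apply_self i σ),
    sum_jucysMurphy_apply, jucysMurphyFactor, Matrix.add_apply, Matrix.smul_apply,
    jucysMurphy_apply_self, Matrix.one_apply_eq, smul_zero, add_zero, norm_one,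
    inv_mul_lt_one₀ (by linarith [(i : ℕ).cast_nonneg (α := ℝ)])]
  exact hD

lemma jucysMurphyFactor_mul_inv {i : Fin k} (hiD : (i : ℕ) < D) :
    jucysMurphyFactor k D i * (jucysMurphyFactor k D i)⁻¹ = 1 :=
  mul_nonsing_inv _ (isUnit_det_jucysMurphyFactor hiD)

lemma partialGram_succ_mul_inv_jucysMurphyFactor {i : Fin k} (hiD : (i : ℕ) < D) :
    partialGram k D (i + 1) * (jucysMurphyFactor k D i)⁻¹ = partialGram k D i := by
  rw [← partialGram_mul_jucysMurphyFactor (by omega) i, mul_assoc,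
    jucysMurphyFactor_mul_inv hiD, Matrix.mul_one]

lemma inv_jucysMurphyFactor_mem_leftInvariant (i : Fin k) :
    (jucysMurphyFactor k D i)⁻¹ ∈ leftInvariant ℝ (Perm (Fin k)) :=
  inv_mem_leftInvariant (add_mem (one_mem _)
    (Subalgebra.smul_mem _ (jucysMurphy_mem_leftInvariant i) _))

lemma inv_jucysMurphyFactor_mem_cosetBlock (i : Fin k) :
    (jucysMurphyFactor k D i)⁻¹ ∈ cosetBlock ℝ (Perm (Fin k)) (fixingFrom k (i + 1)) :=
  inv_mem_cosetBlock (add_mem (one_mem _)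
    (Subalgebra.smul_mem _ (jucysMurphy_mem_cosetBlock i) _))

lemma inv_jucysMurphyFactor_sub_one_apply {i : Fin k} (hiD : (i : ℕ) < D) (π : Perm (Fin k)) :
    ((jucysMurphyFactor k D i)⁻¹ - 1) 1 π
      = -((D : ℝ)⁻¹ * ∑ j ∈ Iio i, (jucysMurphyFactor k D i)⁻¹ 1 (swap j i * π)) := by
  have h := jucysMurphyFactor_mul_inv hiD
  have hB := inv_jucysMurphyFactor_mem_leftInvariant (D := D) i
  set B := (jucysMurphyFactor k D i)⁻¹
  rw [jucysMurphyFactor, Matrix.add_mul, Matrix.one_mul, Matrix.smul_mul,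
    ← eq_sub_iff_add_eq'] at h
  rw [← neg_sub, ← h, Matrix.neg_apply, Matrix.smul_apply, smul_eq_mul, jucysMurphy_mul_apply]
  congr 2
  refine sum_congr rfl fun j _ => ?_
  rw [apply_eq_one_apply hB, one_mul, swap_inv]

lemma mul_rowMass_inv_jucysMurphyFactor_sub_one_le {i : Fin k} (hiD : (i : ℕ) < D)
    (t : Fin k) :
    (D : ℝ) * rowMass ((jucysMurphyFactor k D i)⁻¹ - 1) i t
      ≤ (if t < i then 1 else 0)
        + ∑ j ∈ Iio i, rowMass ((jucysMurphyFactor k D i)⁻¹ - 1) i (swap j i t) := by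
  set B := (jucysMurphyFactor k D i)⁻¹
  have hD : (0 : ℝ) < D := by exact_mod_cast (show 0 < D by omega)
  have hfibre : ∀ j : Fin k,
      ∑ π with π i = t, |B 1 (swap j i * π)| = rowMass B i (swap j i t) := fun j =>
    sum_equiv (Equiv.mulLeft (swap j i)) (fun π => by simp) (fun _ _ => rfl)
  have hhit : ∑ j ∈ Iio i, rowMass 1 i (swap j i t) = if t < i then 1 else 0 := by
    have h : ∀ j, (i = swap j i t ↔ j = t) := fun j => by
      rw [eq_comm, swap_apply_eq_iff, swap_apply_right, eq_comm]
    simp_rw [rowMass_one, h]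
    rw [sum_ite_eq']
    simp only [mem_Iio]
  calc (D : ℝ) * rowMass (B - 1) i t
      ≤ D * ∑ π with π i = t, (D : ℝ)⁻¹ * ∑ j ∈ Iio i, |B 1 (swap j i * π)| := by
        refine mul_le_mul_of_nonneg_left (sum_le_sum fun π _ => ?_) hD.le
        rw [inv_jucysMurphyFactor_sub_one_apply hiD, abs_neg, abs_mul, abs_inv, Nat.abs_cast]
        exact mul_le_mul_of_nonneg_left (abs_sum_le_sum_abs _ _) (by positivity)
    _ = ∑ j ∈ Iio i, rowMass B i (swap j i t) := by
        rw [← mul_sum, ← mul_assoc, mul_inv_cancel₀ hD.ne', one_mul, sum_comm]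
        simp only [hfibre]
    _ ≤ ∑ j ∈ Iio i, (rowMass 1 i (swap j i t) + rowMass (B - 1) i (swap j i t)) := by
        refine sum_le_sum fun j _ => ?_
        have h := rowMass_add_le 1 (B - 1) i (swap j i t)
        rwa [add_sub_cancel] at h
    _ = _ := by rw [sum_add_distrib, hhit]

lemma rowMass_inv_jucysMurphyFactor_sub_one_le {i : Fin k} (hiD : (i : ℕ) < D) (t : Fin k) :
    rowMass ((jucysMurphyFactor k D i)⁻¹ - 1) i t ≤ ((D : ℝ) - i)⁻¹ := by
  set R := rowMass ((jucysMurphyFactor k D i)⁻¹ - 1) i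
  have : Nonempty (Fin k) := ⟨i⟩
  obtain ⟨t₀, ht₀⟩ := Finite.exists_max R
  have hDi : 0 < (D : ℝ) - i := sub_pos.2 (by exact_mod_cast hiD)
  have hmax : (D : ℝ) * R t₀ ≤ 1 + i * R t₀ := by
    refine (mul_rowMass_inv_jucysMurphyFactor_sub_one_le hiD t₀).trans (add_le_add ?_ ?_)
    · split_ifs <;> norm_num
    · simpa using sum_le_sum fun j (_ : j ∈ Iio i) => ht₀ (swap j i t₀)
  refine (ht₀ t).trans ?_
  rw [inv_eq_one_div, le_div_iff₀ hDi]
  linarith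

lemma rowMass_inv_jucysMurphyFactor_sub_one_self_le {i : Fin k} (hiD : (i : ℕ) < D) :
    rowMass ((jucysMurphyFactor k D i)⁻¹ - 1) i i ≤ i / (D * ((D : ℝ) - i)) := by
  have hDi : 0 < (D : ℝ) - i := sub_pos.2 (by exact_mod_cast hiD)
  have h := (mul_rowMass_inv_jucysMurphyFactor_sub_one_le hiD i).trans
    (add_le_add (le_of_eq (if_neg (lt_irrefl i))) (sum_le_sum fun j (_ : j ∈ Iio i) =>
      rowMass_inv_jucysMurphyFactor_sub_one_le hiD (swap j i i)))
  rw [sum_const, Fin.card_Iio, nsmul_eq_mul, zero_add] at h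
  rw [mul_comm, ← div_div, le_div_iff₀ (by linarith [(i : ℕ).cast_nonneg (α := ℝ)])]
  rwa [div_eq_mul_inv, mul_comm]

end JucysMurphyFactorInverse

lemma one_add_pow_sub_one_le {β : ℝ} (hβ : 0 ≤ β) {n : ℕ} (hnβ : n * β ≤ 1) :
    (1 + β) ^ n - 1 ≤ 2 * (n * β) := by
  have hexp : (1 + β) ^ n ≤ Real.exp (n * β) := by
    rw [Real.exp_nat_mul]
    exact pow_le_pow_left₀ (by linarith) (by linarith [Real.add_one_le_exp β]) n
  have := Real.abs_exp_sub_one_le (x := n * β) (by rwa [abs_of_nonneg (by positivity)])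
  rw [abs_of_nonneg (by positivity : (0 : ℝ) ≤ n * β)] at this
  linarith [le_abs_self (Real.exp (n * β) - 1)]

section Estimate

variable {k D : ℕ}

noncomputable def jucysMurphyInvProd (k D : ℕ) : ℕ → Matrix (Perm (Fin k)) (Perm (Fin k)) ℝ
  | 0 => 1
  | m + 1 => if h : m < k then (jucysMurphyFactor k D ⟨m, h⟩)⁻¹ * jucysMurphyInvProd k D m
      else jucysMurphyInvProd k D m

lemma jucysMurphyInvProd_succ {m : ℕ} (h : m < k) :
    jucysMurphyInvProd k D (m + 1)
      = (jucysMurphyFactor k D ⟨m, h⟩)⁻¹ * jucysMurphyInvProd k D m :=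
  dif_pos h

lemma jucysMurphyInvProd_mem_leftInvariant (m : ℕ) :
    jucysMurphyInvProd k D m ∈ leftInvariant ℝ (Perm (Fin k)) := by
  induction m with
  | zero => exact one_mem _
  | succ m ih =>
    by_cases h : m < k
    · rw [jucysMurphyInvProd_succ h]
      exact mul_mem (inv_jucysMurphyFactor_mem_leftInvariant _) ih
    · rwa [jucysMurphyInvProd, dif_neg h]

lemma jucysMurphyInvProd_mem_cosetBlock (m : ℕ) :
    jucysMurphyInvProd k D m ∈ cosetBlock ℝ (Perm (Fin k)) (fixingFrom k m) := by
  induction m with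
  | zero => exact one_mem _
  | succ m ih =>
    have ih' : jucysMurphyInvProd k D m ∈ cosetBlock ℝ _ (fixingFrom k (m + 1)) :=
      cosetBlock_mono (fixingFrom_mono m.le_succ) ih
    by_cases h : m < k
    · have hB := inv_jucysMurphyFactor_mem_cosetBlock (D := D) (⟨m, h⟩ : Fin k)
      rw [jucysMurphyInvProd_succ h]
      exact mul_mem hB ih'
    · rwa [jucysMurphyInvProd, dif_neg h]

lemma partialGram_mul_jucysMurphyInvProd (hkD : k ≤ D) {m : ℕ} (hm : m ≤ k) :
    partialGram k D m * jucysMurphyInvProd k D m = (D : ℝ) ^ k • 1 := by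
  induction m with
  | zero => rw [partialGram_zero, jucysMurphyInvProd, Matrix.mul_one]
  | succ m ih =>
    rw [jucysMurphyInvProd_succ hm, ← mul_assoc,
      partialGram_succ_mul_inv_jucysMurphyFactor (i := ⟨m, hm⟩) (show m < D by omega)]
    exact ih (by omega)

lemma permGram_mul_smul_jucysMurphyInvProd (hkD : k ≤ D) :
    permGram k D * (((D : ℝ) ^ k)⁻¹ • jucysMurphyInvProd k D k) = 1 := by
  have hD : (D : ℝ) ^ k ≠ 0 := by
    rcases Nat.eq_zero_or_pos D with rfl | hD
    · rw [Nat.le_zero.1 hkD, pow_zero]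
      exact one_ne_zero
    · positivity
  rw [Matrix.mul_smul, ← partialGram_self, partialGram_mul_jucysMurphyInvProd hkD le_rfl,
    smul_smul, inv_mul_cancel₀ hD, one_smul]

lemma rowMass_inv_jucysMurphyFactor_sub_one_self_le_of_two_mul_le (h2kD : 2 * k ≤ D)
    (i : Fin k) : rowMass ((jucysMurphyFactor k D i)⁻¹ - 1) i i ≤ 2 * k / (D : ℝ) ^ 2 := by
  have hi := i.isLt
  have h2iD : 2 * (i : ℝ) + 2 ≤ D := by exact_mod_cast (by omega : 2 * (i : ℕ) + 2 ≤ D)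
  have hik : (i : ℝ) + 1 ≤ k := by exact_mod_cast hi
  have h1 : (D : ℝ) ≤ 2 * (D - i) := by linarith
  refine (rowMass_inv_jucysMurphyFactor_sub_one_self_le (by omega)).trans ?_
  have hD : (0 : ℝ) < D := by linarith [(i : ℕ).cast_nonneg (α := ℝ)]
  rw [div_le_div_iff₀ (mul_pos hD (by linarith)) (by positivity)]
  nlinarith [mul_le_mul_of_nonneg_left h1 (by positivity : (0 : ℝ) ≤ k * D),
    mul_le_mul_of_nonneg_right hik (by positivity : (0 : ℝ) ≤ D ^ 2),
    (i : ℕ).cast_nonneg (α := ℝ)]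

lemma jucysMurphyInvProd_apply_one_of_not_mem {m : ℕ} {y : Perm (Fin k)}
    (hy : y ∉ fixingFrom k m) : jucysMurphyInvProd k D m 1 y = 0 :=
  jucysMurphyInvProd_mem_cosetBlock m 1 y (by simpa using hy)

lemma abs_jucysMurphyInvProd_succ_apply_one_sub_le {m : ℕ} (hm : m < k) {M : ℝ}
    (hM : ∀ y, |jucysMurphyInvProd k D m 1 y| ≤ M) (x : Perm (Fin k)) :
    |jucysMurphyInvProd k D (m + 1) 1 x - jucysMurphyInvProd k D m 1 x|
      ≤ M * rowMass ((jucysMurphyFactor k D ⟨m, hm⟩)⁻¹ - 1) ⟨m, hm⟩ (x ⟨m, hm⟩) := by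
  have hdiff : jucysMurphyInvProd k D (m + 1) - jucysMurphyInvProd k D m
      = ((jucysMurphyFactor k D ⟨m, hm⟩)⁻¹ - 1) * jucysMurphyInvProd k D m := by
    rw [jucysMurphyInvProd_succ hm, Matrix.sub_mul, Matrix.one_mul]
  rw [← Matrix.sub_apply, hdiff]
  refine abs_mul_apply_one_le (jucysMurphyInvProd_mem_leftInvariant m) (fun y hy => ?_) hM x
  exact jucysMurphyInvProd_apply_one_of_not_mem fun h => hy (mem_fixingFrom.1 h _ le_rfl)

lemma jucysMurphyInvProd_apply_one_estimates (h2kD : 2 * k ≤ D) {m : ℕ} (hm : m ≤ k) :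
    (∀ x, |jucysMurphyInvProd k D m 1 x| ≤ (1 + 2 * k / (D : ℝ) ^ 2) ^ m) ∧
      |jucysMurphyInvProd k D m 1 1 - 1| ≤ (1 + 2 * k / (D : ℝ) ^ 2) ^ m - 1 := by
  set β : ℝ := 2 * k / (D : ℝ) ^ 2
  have hβ : 0 ≤ β := by positivity
  induction m with
  | zero =>
    refine ⟨fun x => ?_, by simp [jucysMurphyInvProd]⟩
    rw [jucysMurphyInvProd, Matrix.one_apply, pow_zero]
    split_ifs <;> simp
  | succ m ih =>
    obtain ⟨ihx, ih1⟩ := ih (by omega)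
    have hM : 0 ≤ (1 + β) ^ m := by positivity
    have hstep := abs_jucysMurphyInvProd_succ_apply_one_sub_le hm ihx
    set i : Fin k := ⟨m, hm⟩
    have hself := rowMass_inv_jucysMurphyFactor_sub_one_self_le_of_two_mul_le h2kD i
    have hDi : 1 ≤ (D : ℝ) - m := by
      have : ((m + 1 : ℕ) : ℝ) ≤ D := by exact_mod_cast (show m + 1 ≤ D by omega)
      push_cast at this
      linarith
    have hR : ∀ t, rowMass ((jucysMurphyFactor k D i)⁻¹ - 1) i t ≤ 1 := fun t =>
      (rowMass_inv_jucysMurphyFactor_sub_one_le (show m < D by omega) t).trans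
        (inv_le_one_of_one_le₀ hDi)
    rw [pow_succ]
    refine ⟨fun x => ?_, ?_⟩
    · have h := hstep x
      by_cases hx : x i = i
      · rw [hx] at h
        have := abs_sub_abs_le_abs_sub (jucysMurphyInvProd k D (m + 1) 1 x)
          (jucysMurphyInvProd k D m 1 x)
        nlinarith [ihx x, mul_le_mul_of_nonneg_left hself hM]
      · rw [jucysMurphyInvProd_apply_one_of_not_mem (m := m)
          (fun h => hx (mem_fixingFrom.1 h i le_rfl)), sub_zero] at h
        nlinarith [mul_le_mul_of_nonneg_left (hR (x i)) hM]
    · have h := abs_sub_le (jucysMurphyInvProd k D (m + 1) 1 1)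
        (jucysMurphyInvProd k D m 1 1) 1
      have h1 := hstep 1
      rw [Perm.one_apply] at h1
      nlinarith [mul_le_mul_of_nonneg_left hself hM]

lemma abs_jucysMurphyInvProd_apply_one_one_sub_one_le (h2kD : 2 * k ≤ D) :
    |jucysMurphyInvProd k D k 1 1 - 1| ≤ 4 * (k : ℝ) ^ 2 / (D : ℝ) ^ 2 := by
  have hkD : 2 * (k : ℝ) ≤ D := by exact_mod_cast h2kD
  have hkβ : (k : ℝ) * (2 * k / (D : ℝ) ^ 2) ≤ 1 := by
    rw [← mul_div_assoc]
    exact div_le_one_of_le₀ (by nlinarith [(k : ℕ).cast_nonneg (α := ℝ)]) (by positivity)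
  calc |jucysMurphyInvProd k D k 1 1 - 1| ≤ 2 * (k * (2 * k / (D : ℝ) ^ 2)) :=
        (jucysMurphyInvProd_apply_one_estimates h2kD le_rfl).2.trans
          (one_add_pow_sub_one_le (by positivity) hkβ)
    _ = 4 * (k : ℝ) ^ 2 / (D : ℝ) ^ 2 := by ring

end Estimate

lemma two_mul_le_of_sqrt_six_mul_rpow_lt {k D : ℕ} (hk : 1 ≤ k)
    (hD : Real.sqrt 6 * (k : ℝ) ^ ((7 : ℝ) / 4) < D) : 2 * k ≤ D := by
  have h6 : (2 : ℝ) ≤ Real.sqrt 6 := by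
    rw [Real.le_sqrt] <;> norm_num
  have hk74 : (k : ℝ) ≤ (k : ℝ) ^ ((7 : ℝ) / 4) :=
    Real.self_le_rpow_of_one_le (by exact_mod_cast hk) (by norm_num)
  have : (2 * k : ℝ) < D := by nlinarith [(k : ℕ).cast_nonneg (α := ℝ)]
  exact_mod_cast this.le

/-- There is a universal constant `C > 0` such that for all `k ≥ 1` and
`D > √6 · k^{7/4}`, the Gram matrix `G_D` is invertible and the unitary Weingarten function
at the identity, `Wg^U(id, D) = (G_D⁻¹)(id, id)`, satisfies
`|Wg^U(id, D) − D^{−k}| ≤ C · k^{7/2} · D^{−(k+2)}`. -/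
theorem weingarten_identity_estimate :
    ∃ C : ℝ, 0 < C ∧
      ∀ (k D : ℕ), 1 ≤ k → Real.sqrt 6 * (k : ℝ) ^ ((7 : ℝ) / 4) < (D : ℝ) →
        IsUnit (permGram k D) ∧
        |(permGram k D)⁻¹ 1 1 - ((D : ℝ) ^ k)⁻¹|
          ≤ C * (k : ℝ) ^ ((7 : ℝ) / 2) * ((D : ℝ) ^ (k + 2))⁻¹ := by
  refine ⟨4, by norm_num, fun k D hk hD => ?_⟩
  have h2kD := two_mul_le_of_sqrt_six_mul_rpow_lt hk hD
  have hinv := permGram_mul_smul_jucysMurphyInvProd (show k ≤ D by omega)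
  refine ⟨(Matrix.isUnit_iff_isUnit_det _).2 (isUnit_det_of_right_inverse hinv), ?_⟩
  have hD : (0 : ℝ) < D := by exact_mod_cast (show 0 < D by omega)
  have hk72 : (k : ℝ) ^ 2 ≤ (k : ℝ) ^ ((7 : ℝ) / 2) := by
    rw [← Real.rpow_natCast]
    exact Real.rpow_le_rpow_of_exponent_le (by exact_mod_cast hk) (by norm_num)
  rw [inv_eq_right_inv hinv, Matrix.smul_apply, smul_eq_mul, ← mul_sub_one, abs_mul,
    abs_of_pos (by positivity)]
  calc ((D : ℝ) ^ k)⁻¹ * |jucysMurphyInvProd k D k 1 1 - 1|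
      ≤ ((D : ℝ) ^ k)⁻¹ * (4 * (k : ℝ) ^ 2 / (D : ℝ) ^ 2) :=
        mul_le_mul_of_nonneg_left (abs_jucysMurphyInvProd_apply_one_one_sub_one_le h2kD)
          (by positivity)
    _ = 4 * (k : ℝ) ^ 2 * ((D : ℝ) ^ (k + 2))⁻¹ := by
        rw [pow_add]
        field_simp
    _ ≤ 4 * (k : ℝ) ^ ((7 : ℝ) / 2) * ((D : ℝ) ^ (k + 2))⁻¹ := by gcongr
end

section
/- For each sequence s = (s_0,...,s_k) define 2k vectors in ℂ^D by ψ_{2i−1} = |y^i_{s_0...s_i}⟩ and ψ_{2i} = the complex conjugate of |y^i_{s_0...s_i}⟩ (entrywise, in the standard basis), for i = 1,...,k. Then for every fixed s_0 ∈ {1,...,D_m} and every perfect matching m ∈ P₂(2k) with m ≠ e, letting L_m denote the number of indices i ∈ {1,...,k} whose pair {2i−1, 2i} lies in a non-trivial connected component of the graph on {1,...,2k} whose edges are the pairs of m together with the pairs of e (a component being trivial if it consists of a single pair {2i−1,2i} that is also a pair of m), one has ∑_{(s_1,...,s_k) ∈ {1,...,D_m}^k} ∏_{i=1}^k |∑_{x=1}^{D}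 ψ_{m(2i−1)}(x) · ψ_{m(2i)}(x)| · λ^i_{s_0...s_i} ≤ D^{k − ⌊L_m/2⌋}, where m(2i−1), m(2i) denote the two elements of the i-th pair of m. -/
/-!
Group the factors of the summand by the level `i` at which they become determined: the weight
`λ^i` and the overlaps `|⟨ψ_p, ψ_{m p}⟩|` of the pairs of `m` whose later point lies at level `i`.
Sum out `s_k, s_{k-1}, …, s_1` in turn. Completeness gives `∑_t λ_t |⟨u, y_t⟩|² = ‖u‖²` and
`∑_t λ_t = D`, so by Cauchy–Schwarz a level whose two points are paired with `c ≤ 2` earlier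
points contributes at most `D`, `√D`, `1`, i.e. `√D ^ (2 - c)`. Every pair of `m` that is not a
pair of `e` is counted exactly once in `∑ c`, which gives `√D ^ (2k - L_m) ≤ D ^ (k - ⌊L_m/2⌋)`.
-/

open Matrix

/-- Perfect matchings (pair partitions) of a `2k`-element set, realized as fixed-point-free
involutions of `Fin k × Bool`, where `(i, false)` plays the role of the point `2i−1` and
`(i, true)` the role of the point `2i` of `{1, …, 2k}`. -/
abbrev Pairing (k : ℕ) :=
  {m : Equiv.Perm (Fin k × Bool) // ∀ x, m x ≠ x ∧ m (m x) = x}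

/-- The identity matching `e = {1,2}{3,4}⋯{2k−1,2k}`, pairing `(i,false)` with `(i,true)`. -/
def ePairing (k : ℕ) : Pairing k :=
  ⟨Equiv.prodCongr (Equiv.refl (Fin k)) (Function.Involutive.toPerm not Bool.not_not),
    by
      intro x
      constructor
      · intro h
        have h2 := congrArg Prod.snd h
        simp [Function.Involutive.toPerm] at h2
      · simp [Function.Involutive.toPerm, Prod.map]⟩

/-- `c(m,n)`: the number of connected components of the union graph of the matchings
`m` and `n`, i.e. the number of orbits of the subgroup generated by the two involutions. -/
noncomputable def matchingComponents {k : ℕ} (m n : Pairing k) : ℕ :=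
  Nat.card (MulAction.orbitRel.Quotient
    (Subgroup.closure {(m : Equiv.Perm (Fin k × Bool)), (n : Equiv.Perm (Fin k × Bool))})
    (Fin k × Bool))

open Finset

theorem Real.sum_mul_mul_le_sqrt_mul_sqrt {ι : Type*} (s : Finset ι) {w f g : ι → ℝ}
    (hw : ∀ i, 0 ≤ w i) (hf : ∀ i, 0 ≤ f i) (hg : ∀ i, 0 ≤ g i) :
    ∑ i ∈ s, w i * (f i * g i) ≤ √(∑ i ∈ s, w i * f i ^ 2) * √(∑ i ∈ s, w i * g i ^ 2) := by
  convert Real.sum_sqrt_mul_sqrt_le s (fun i => mul_nonneg (hw i) (sq_nonneg (f i)))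
    (fun i => mul_nonneg (hw i) (sq_nonneg (g i))) using 2 with i
  rw [Real.sqrt_mul (hw i), Real.sqrt_mul (hw i), Real.sqrt_sq (hf i), Real.sqrt_sq (hg i),
    mul_mul_mul_comm, Real.mul_self_sqrt (hw i)]

theorem Finset.prod_sqrt_pow_two_sub_le {ι : Type*} (s : Finset ι) {D : ℝ} (hD : 1 ≤ D)
    {c : ι → ℕ} (hc : ∀ i, c i ≤ 2) :
    ∏ i ∈ s, √D ^ (2 - c i) ≤ D ^ (#s - (∑ i ∈ s, c i) / 2) := by
  have hsum : ∑ i ∈ s, (2 - c i) + ∑ i ∈ s, c i = 2 * #s := by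
    simp [← sum_add_distrib, Nat.sub_add_cancel (hc _), mul_comm]
  calc ∏ i ∈ s, √D ^ (2 - c i) = √D ^ ∑ i ∈ s, (2 - c i) := prod_pow_eq_pow_sum _ _ _
    _ ≤ √D ^ (2 * (#s - (∑ i ∈ s, c i) / 2)) :=
        pow_le_pow_right₀ (Real.one_le_sqrt.mpr hD) (by omega)
    _ = D ^ (#s - (∑ i ∈ s, c i) / 2) := by rw [pow_mul, Real.sq_sqrt (by linarith)]

theorem Fin.cons_eq_cons_of_forall_le {α : Type*} {k : ℕ} (a : α) {i : Fin k}
    {s t : Fin k → α} (h : ∀ j ≤ i, s j = t j) :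
    ∀ j ≤ i.succ, (Fin.cons a s : Fin (k + 1) → α) j = (Fin.cons a t : Fin (k + 1) → α) j := by
  intro j hj
  cases j using Fin.cases with
  | zero => rfl
  | succ j => exact h j (Fin.succ_le_succ_iff.mp hj)

theorem sum_prod_le_prod_of_sum_update_le {α : Type*} [Fintype α] {k : ℕ}
    (f : Fin k → (Fin k → α) → ℝ) (C : Fin k → ℝ) (hf : ∀ i s, 0 ≤ f i s) (hC : ∀ i, 0 ≤ C i)
    (hadapted : ∀ i s t, (∀ j ≤ i, s j = t j) → f i s = f i t)
    (hbound : ∀ i s, ∑ v, f i (Function.update s i v) ≤ C i) :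
    ∑ s, ∏ i, f i s ≤ ∏ i, C i := by
  induction k with
  | zero => simp
  | succ k ih =>
    have hhead : ∀ s, f 0 s = f 0 (fun _ => s 0) := fun s =>
      hadapted 0 _ _ fun j hj => by rw [Fin.le_zero_iff.mp hj]
    have htail (v : α) :
        ∑ t : Fin k → α, ∏ i : Fin k, f i.succ (Fin.cons v t) ≤ ∏ i : Fin k, C i.succ :=
      ih (fun i t => f i.succ (Fin.cons v t)) (fun i => C i.succ) (fun _ _ => hf _ _)
        (fun _ => hC _) (fun _ _ _ h => hadapted _ _ _ (Fin.cons_eq_cons_of_forall_le v h))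
        (fun i s => by simpa only [Fin.cons_update] using hbound i.succ (Fin.cons v s))
    have hfirst : ∑ v, f 0 (fun _ => v) ≤ C 0 := by
      rcases isEmpty_or_nonempty α with hα | ⟨⟨a⟩⟩
      · simpa using hC 0
      · simpa [hhead (Function.update _ 0 _)] using hbound 0 (fun _ => a)
    calc ∑ s, ∏ i, f i s
        = ∑ v, f 0 (fun _ => v) * ∑ t : Fin k → α, ∏ i : Fin k, f i.succ (Fin.cons v t) := by
          rw [← (Fin.consEquiv fun _ => α).sum_comp, Fintype.sum_prod_type]
          simp only [Fin.consEquiv, Equiv.coe_fn_mk, Fin.prod_univ_succ, hhead, Fin.cons_zero,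
            mul_sum]
      _ ≤ ∑ v, f 0 (fun _ => v) * ∏ i : Fin k, C i.succ :=
          sum_le_sum fun v _ => mul_le_mul_of_nonneg_left (htail v) (hf _ _)
      _ ≤ C 0 * ∏ i : Fin k, C i.succ := by
          rw [← sum_mul]
          exact mul_le_mul_of_nonneg_right hfirst (prod_nonneg fun i _ => hC _)
      _ = ∏ i, C i := (Fin.prod_univ_succ C).symm

section Frame

variable {τ n : Type*} [Fintype τ] [Fintype n] {Y : τ → n → ℂ} {Λ : τ → ℝ}

theorem norm_star_dotProduct_self {v : n → ℂ} (hv : ∑ x, ‖v x‖ ^ 2 = 1) :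
    ‖star v ⬝ᵥ v‖ = 1 := by
  simp only [dotProduct, Pi.star_apply, RCLike.star_def, Complex.conj_mul']
  exact_mod_cast (congrArg norm hv).trans norm_one

theorem norm_ite_star_dotProduct (b : Bool) (v u : n → ℂ) :
    ‖(if b then star v else v) ⬝ᵥ u‖ = ‖v ⬝ᵥ (if b then star u else u)‖ := by
  cases b
  · rfl
  · rw [if_pos rfl, if_pos rfl, ← norm_star, ← star_dotProduct_star, star_star, dotProduct_comm]

theorem frame_sum_norm_dotProduct_sq [DecidableEq n]
    (hframe : ∑ t, (Λ t : ℂ) • vecMulVec (Y t) (star (Y t)) = 1) (u : n → ℂ) :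
    ∑ t, Λ t * ‖Y t ⬝ᵥ u‖ ^ 2 = ∑ x, ‖u x‖ ^ 2 := by
  have h := congrArg (fun A => (A *ᵥ star u) ⬝ᵥ u) hframe
  simp only [sum_mulVec, smul_mulVec, vecMulVec_mulVec, sum_dotProduct, one_mulVec,
    op_smul_eq_smul, smul_dotProduct, star_dotProduct_star, smul_eq_mul, dotProduct_comm u] at h
  simp only [dotProduct, Pi.star_apply, RCLike.star_def, Complex.conj_mul'] at h
  exact_mod_cast h

theorem frame_sum_weight [DecidableEq n] (hY : ∀ t, ∑ x, ‖Y t x‖ ^ 2 = 1)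
    (hframe : ∑ t, (Λ t : ℂ) • vecMulVec (Y t) (star (Y t)) = 1) :
    ∑ t, Λ t = Fintype.card n := by
  calc ∑ t, Λ t = ∑ x, ∑ t, Λ t * ‖Y t ⬝ᵥ Pi.single x 1‖ ^ 2 := by
        simp only [dotProduct_single_one, mul_one, sum_comm (γ := n), ← mul_sum, hY]
    _ = ∑ x : n, ∑ x', ‖(Pi.single x 1 : n → ℂ) x'‖ ^ 2 := by
        simp only [frame_sum_norm_dotProduct_sq hframe]
    _ = Fintype.card n := by simp [Pi.single_apply, apply_ite, ite_pow]

theorem frame_sum_norm_dotProduct_le [DecidableEq n] (hΛ : ∀ t, 0 ≤ Λ t)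
    (hY : ∀ t, ∑ x, ‖Y t x‖ ^ 2 = 1)
    (hframe : ∑ t, (Λ t : ℂ) • vecMulVec (Y t) (star (Y t)) = 1)
    {u : n → ℂ} (hu : ∑ x, ‖u x‖ ^ 2 = 1) :
    ∑ t, Λ t * ‖Y t ⬝ᵥ u‖ ≤ √(Fintype.card n) := by
  simpa [frame_sum_norm_dotProduct_sq hframe, hu, frame_sum_weight hY hframe] using
    Real.sum_mul_mul_le_sqrt_mul_sqrt univ hΛ (fun t => norm_nonneg (Y t ⬝ᵥ u))
      (fun _ => zero_le_one)

theorem frame_sum_norm_dotProduct_mul_le [DecidableEq n] (hΛ : ∀ t, 0 ≤ Λ t)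
    (hframe : ∑ t, (Λ t : ℂ) • vecMulVec (Y t) (star (Y t)) = 1)
    {u w : n → ℂ} (hu : ∑ x, ‖u x‖ ^ 2 = 1) (hw : ∑ x, ‖w x‖ ^ 2 = 1) :
    ∑ t, Λ t * (‖Y t ⬝ᵥ u‖ * ‖Y t ⬝ᵥ w‖) ≤ 1 := by
  simpa [frame_sum_norm_dotProduct_sq hframe, hu, hw] using
    Real.sum_mul_mul_le_sqrt_mul_sqrt univ hΛ (fun t => norm_nonneg (Y t ⬝ᵥ u))
      (fun t => norm_nonneg (Y t ⬝ᵥ w))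

theorem frame_sum_prod_norm_dotProduct_le [DecidableEq n] (hΛ : ∀ t, 0 ≤ Λ t)
    (hY : ∀ t, ∑ x, ‖Y t x‖ ^ 2 = 1)
    (hframe : ∑ t, (Λ t : ℂ) • vecMulVec (Y t) (star (Y t)) = 1)
    {β : Type*} {S : Finset β} (hS : #S ≤ 2) {w : β → n → ℂ}
    (hw : ∀ b ∈ S, ∑ x, ‖w b x‖ ^ 2 = 1) :
    ∑ t, Λ t * ∏ b ∈ S, ‖Y t ⬝ᵥ w b‖ ≤ √(Fintype.card n) ^ (2 - #S) := by
  classical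
  interval_cases h : #S
  · simp [card_eq_zero.mp h, frame_sum_weight hY hframe]
  · obtain ⟨b, rfl⟩ := card_eq_one.mp h
    simpa using frame_sum_norm_dotProduct_le hΛ hY hframe (hw b (mem_singleton_self b))
  · obtain ⟨b, c, hbc, rfl⟩ := card_eq_two.mp h
    simpa [prod_pair hbc] using
      frame_sum_norm_dotProduct_mul_le hΛ hframe (hw b (by simp)) (hw c (by simp))

end Frame

theorem Function.Involutive.prod_filter_lt_eq_prod_filter_gt {ι M : Type*} [Fintype ι]
    [CommMonoid M] {σ : ι → ι} (hσ : Function.Involutive σ) (r : ι → ℕ) {g : ι → M}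
    (hg : ∀ p, g (σ p) = g p) :
    ∏ p ∈ univ.filter (fun p => r p < r (σ p)), g p
      = ∏ p ∈ univ.filter (fun p => r (σ p) < r p), g p :=
  prod_nbij' σ σ (by simp [hσ _]) (by simp [hσ _]) (fun p _ => hσ p) (fun p _ => hσ p)
    (fun p _ => (hg p).symm)

def pointIndex {k : ℕ} (p : Fin k × Bool) : ℕ := 2 * (p.1 : ℕ) + if p.2 then 1 else 0

theorem pointIndex_lt_iff_of_ne {k : ℕ} {p q : Fin k × Bool} (h : p.1 ≠ q.1) :
    pointIndex p < pointIndex q ↔ p.1 < q.1 := by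
  rw [Fin.lt_def]
  have := Fin.val_ne_of_ne h
  unfold pointIndex
  split_ifs <;> omega

theorem le_of_pointIndex_lt {k : ℕ} {p q : Fin k × Bool} (h : pointIndex p < pointIndex q) :
    p.1 ≤ q.1 := by
  rw [Fin.le_iff_val_le_val]
  unfold pointIndex at h
  split_ifs at h <;> omega

namespace Pairing

variable {k : ℕ} (m : Pairing k)

theorem involutive : Function.Involutive m.1 := fun p => (m.2 p).2

theorem fst_apply_ne_iff (i : Fin k) (b : Bool) :
    (m.1 (i, b)).1 ≠ i ↔ m.1 (i, false) ≠ (i, true) := by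
  have hinv := m.involutive
  constructor
  · rintro h heq
    apply h
    cases b
    · rw [heq]
    · rw [← heq, hinv]
  · intro hne heq
    have hfix := (m.2 (i, b)).1
    have hq : m.1 (i, b) = (i, (m.1 (i, b)).2) := Prod.ext heq rfl
    generalize (m.1 (i, b)).2 = c at hq
    cases b <;> cases c
    · exact hfix hq
    · exact hne hq
    · exact hne (by rw [← hq, hinv])
    · exact hfix hq

theorem card_filter_fst_apply_lt :
    #(univ.filter fun p : Fin k × Bool => (m.1 p).1 < p.1)
      = #(univ.filter fun i : Fin k => m.1 (i, false) ≠ (i, true)) := by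
  have hswap : #(univ.filter fun p : Fin k × Bool => p.1 < (m.1 p).1)
      = #(univ.filter fun p : Fin k × Bool => (m.1 p).1 < p.1) :=
    card_nbij' m.1 m.1 (by simp [Set.MapsTo, m.involutive _])
      (by simp [Set.MapsTo, m.involutive _]) (fun p _ => m.involutive p)
      (fun p _ => m.involutive p)
  have hsplit : #(univ.filter fun p : Fin k × Bool => (m.1 p).1 < p.1)
      + #(univ.filter fun p : Fin k × Bool => p.1 < (m.1 p).1)
      = #(univ.filter fun p : Fin k × Bool => (m.1 p).1 ≠ p.1) := by
    rw [← card_union_of_disjoint (disjoint_filter.mpr fun p _ h h' => lt_asymm h h'),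
      ← filter_or]
    simp_rw [ne_iff_lt_or_gt]
  have hnontrivial : #(univ.filter fun p : Fin k × Bool => (m.1 p).1 ≠ p.1)
      = 2 * #(univ.filter fun i : Fin k => m.1 (i, false) ≠ (i, true)) := by
    simp only [card_filter, Fintype.sum_prod_type, m.fst_apply_ne_iff, Fintype.sum_bool, mul_sum]
    refine sum_congr rfl fun i _ => ?_
    split_ifs <;> rfl
  omega

theorem sum_card_filter_fst_apply_lt :
    ∑ i, #(univ.filter fun b => (m.1 (i, b)).1 < i)
      = #(univ.filter fun i : Fin k => m.1 (i, false) ≠ (i, true)) := by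
  rw [← m.card_filter_fst_apply_lt, card_filter, Fintype.sum_prod_type]
  simp only [card_filter]

end Pairing

section LoopSum

variable {α n : Type*} {k : ℕ}
  (y : Fin (k + 1) → (Fin (k + 1) → α) → n → ℂ) (lam : Fin (k + 1) → (Fin (k + 1) → α) → ℝ)
  (s₀ : α)

/-- `ψ_{2i-1} = y^i` and `ψ_{2i} = conj y^i` along the sequence `(s₀, s)`. -/
def loopVector (s : Fin k → α) (p : Fin k × Bool) : n → ℂ :=
  if p.2 then star (y p.1.succ (Fin.cons s₀ s)) else y p.1.succ (Fin.cons s₀ s)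

/-- The factors of the summand that become known once `s₀, …, s_i` are: the weight `λ^i` and
the overlaps of the pairs of `m` whose later point lies at level `i`. -/
noncomputable def levelFactor [Fintype n] (m : Pairing k) (i : Fin k) (s : Fin k → α) : ℝ :=
  lam i.succ (Fin.cons s₀ s) *
    ∏ b ∈ univ.filter (fun b => pointIndex (m.1 (i, b)) < pointIndex (i, b)),
      ‖loopVector y s₀ s (i, b) ⬝ᵥ loopVector y s₀ s (m.1 (i, b))‖

theorem loopVector_congr
    (hy_prefix : ∀ i s s', (∀ j, j ≤ i → s j = s' j) → y i s = y i s')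
    {s t : Fin k → α} {p : Fin k × Bool} (h : ∀ j ≤ p.1, s j = t j) :
    loopVector y s₀ s p = loopVector y s₀ t p := by
  simp only [loopVector, hy_prefix _ _ _ (Fin.cons_eq_cons_of_forall_le s₀ h)]

theorem sum_norm_loopVector_sq [Fintype n] (hy_unit : ∀ i s, ∑ x, ‖y i s x‖ ^ 2 = 1)
    (s : Fin k → α) (p : Fin k × Bool) : ∑ x, ‖loopVector y s₀ s p x‖ ^ 2 = 1 := by
  unfold loopVector
  split_ifs <;> simp [hy_unit]

theorem levelFactor_nonneg [Fintype n] (hlam : ∀ i s, 0 ≤ lam i s) (m : Pairing k) (i : Fin k)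
    (s : Fin k → α) : 0 ≤ levelFactor y lam s₀ m i s :=
  mul_nonneg (hlam _ _) (prod_nonneg fun _ _ => norm_nonneg _)

theorem levelFactor_congr [Fintype n]
    (hy_prefix : ∀ i s s', (∀ j, j ≤ i → s j = s' j) → y i s = y i s')
    (hlam_prefix : ∀ i s s', (∀ j, j ≤ i → s j = s' j) → lam i s = lam i s')
    (m : Pairing k) {i : Fin k} {s t : Fin k → α} (h : ∀ j ≤ i, s j = t j) :
    levelFactor y lam s₀ m i s = levelFactor y lam s₀ m i t := by
  unfold levelFactor
  rw [hlam_prefix _ _ _ (Fin.cons_eq_cons_of_forall_le s₀ h)]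
  refine congrArg _ (prod_congr rfl fun b hb => ?_)
  have hle : (m.1 (i, b)).1 ≤ i := le_of_pointIndex_lt (mem_filter.mp hb).2
  rw [loopVector_congr y s₀ hy_prefix h,
    loopVector_congr y s₀ hy_prefix fun j hj => h j (hj.trans hle)]

theorem prod_levelFactor [Fintype n] (m : Pairing k) (s : Fin k → α) :
    ∏ i : Fin k, levelFactor y lam s₀ m i s
      = (∏ p ∈ univ.filter (fun p : Fin k × Bool => pointIndex p < pointIndex (m.1 p)),
          ‖loopVector y s₀ s p ⬝ᵥ loopVector y s₀ s (m.1 p)‖) *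
        ∏ i : Fin k, lam i.succ (Fin.cons s₀ s) := by
  rw [m.involutive.prod_filter_lt_eq_prod_filter_gt pointIndex
    (fun p => by rw [m.involutive p, dotProduct_comm]), mul_comm]
  simp only [levelFactor, prod_mul_distrib, prod_filter, Fintype.prod_prod_type]

end LoopSum

section LevelBound

variable {α n : Type*} [Fintype α] [Fintype n] [DecidableEq n] {k : ℕ}
  {y : Fin (k + 1) → (Fin (k + 1) → α) → n → ℂ} {lam : Fin (k + 1) → (Fin (k + 1) → α) → ℝ}
  {s₀ : α}

theorem sum_levelFactor_update_le_of_trivial (hy_unit : ∀ i s, ∑ x, ‖y i s x‖ ^ 2 = 1)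
    (hcomplete : ∀ i s, ∑ t, (lam i (Function.update s i t) : ℂ) •
      vecMulVec (y i (Function.update s i t)) (star (y i (Function.update s i t))) = 1)
    {m : Pairing k} {i : Fin k} (htriv : m.1 (i, false) = (i, true)) (s : Fin k → α) :
    ∑ v, levelFactor y lam s₀ m i (Function.update s i v) ≤ √(Fintype.card n) ^ 2 := by
  have htriv' : m.1 (i, true) = (i, false) := by rw [← htriv, m.involutive]
  have hupper : univ.filter (fun b => pointIndex (m.1 (i, b)) < pointIndex (i, b)) = {true} := by
    ext b
    simp only [mem_filter, mem_univ, true_and, mem_singleton]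
    cases b
    · rw [htriv]; simp [pointIndex]
    · rw [htriv']; simp [pointIndex]
  have hframe := hcomplete i.succ (Fin.cons s₀ s)
  simp only [← Fin.cons_update] at hframe
  rw [Real.sq_sqrt (Nat.cast_nonneg _), ← frame_sum_weight (fun v => hy_unit _ _) hframe]
  refine (sum_congr rfl fun v _ => ?_).le
  rw [levelFactor, hupper, prod_singleton, htriv', loopVector, loopVector, if_pos rfl,
    if_neg Bool.false_ne_true, norm_star_dotProduct_self (hy_unit _ _), mul_one]

theorem sum_levelFactor_update_le_of_nontrivial (hy_unit : ∀ i s, ∑ x, ‖y i s x‖ ^ 2 = 1)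
    (hlam : ∀ i s, 0 ≤ lam i s)
    (hy_prefix : ∀ i s s', (∀ j, j ≤ i → s j = s' j) → y i s = y i s')
    (hcomplete : ∀ i s, ∑ t, (lam i (Function.update s i t) : ℂ) •
      vecMulVec (y i (Function.update s i t)) (star (y i (Function.update s i t))) = 1)
    {m : Pairing k} {i : Fin k} (hnt : m.1 (i, false) ≠ (i, true)) (s : Fin k → α) :
    ∑ v, levelFactor y lam s₀ m i (Function.update s i v)
      ≤ √(Fintype.card n) ^ (2 - #(univ.filter fun b => (m.1 (i, b)).1 < i)) := by
  have hupper : univ.filter (fun b => pointIndex (m.1 (i, b)) < pointIndex (i, b))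
      = univ.filter (fun b => (m.1 (i, b)).1 < i) :=
    filter_congr fun b _ => pointIndex_lt_iff_of_ne ((m.fst_apply_ne_iff i b).mpr hnt)
  have hframe := hcomplete i.succ (Fin.cons s₀ s)
  simp only [← Fin.cons_update] at hframe
  let u (b : Bool) := loopVector y s₀ s (m.1 (i, b))
  have hu : ∀ b : Bool, ∑ x, ‖(if b then star (u b) else u b) x‖ ^ 2 = 1 := fun b => by
    cases b <;> simp [u, sum_norm_loopVector_sq y s₀ hy_unit]
  refine le_of_eq_of_le (sum_congr rfl fun v _ => ?_) (frame_sum_prod_norm_dotProduct_le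
    (fun v => hlam _ _) (fun v => hy_unit _ _) hframe ((card_le_univ _).trans_eq Fintype.card_bool)
    fun b _ => hu b)
  rw [levelFactor, hupper]
  refine congrArg _ (prod_congr rfl fun b hb => ?_)
  have hlt : (m.1 (i, b)).1 < i := (mem_filter.mp hb).2
  rw [loopVector_congr y s₀ hy_prefix (t := s) fun j hj =>
    Function.update_of_ne (hj.trans_lt hlt).ne _ _]
  exact norm_ite_star_dotProduct b _ _

theorem sum_levelFactor_update_le (hy_unit : ∀ i s, ∑ x, ‖y i s x‖ ^ 2 = 1)
    (hlam : ∀ i s, 0 ≤ lam i s)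
    (hy_prefix : ∀ i s s', (∀ j, j ≤ i → s j = s' j) → y i s = y i s')
    (hcomplete : ∀ i s, ∑ t, (lam i (Function.update s i t) : ℂ) •
      vecMulVec (y i (Function.update s i t)) (star (y i (Function.update s i t))) = 1)
    (m : Pairing k) (i : Fin k) (s : Fin k → α) :
    ∑ v, levelFactor y lam s₀ m i (Function.update s i v)
      ≤ √(Fintype.card n) ^ (2 - #(univ.filter fun b => (m.1 (i, b)).1 < i)) := by
  by_cases htriv : m.1 (i, false) = (i, true)
  · have hfst (b : Bool) : (m.1 (i, b)).1 = i :=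
      by_contra fun h => (m.fst_apply_ne_iff i b).mp h htriv
    simpa [hfst] using sum_levelFactor_update_le_of_trivial hy_unit hcomplete htriv s
  · exact sum_levelFactor_update_le_of_nontrivial hy_unit hlam hy_prefix hcomplete htriv s

end LevelBound

theorem orthogonal_loop_decomposition_bound_general
    (ℓ k Dm : ℕ)
    (y : Fin (k + 1) → (Fin (k + 1) → Fin Dm) → (Fin (2 ^ ℓ) → ℂ))
    (lam : Fin (k + 1) → (Fin (k + 1) → Fin Dm) → ℝ)
    (hy_unit : ∀ i s, ∑ x, ‖y i s x‖ ^ 2 = 1)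
    (hlam : ∀ i s, 0 < lam i s ∧ lam i s ≤ 1)
    (hy_prefix : ∀ (i : Fin (k + 1)) (s s' : Fin (k + 1) → Fin Dm),
      (∀ j, j ≤ i → s j = s' j) → y i s = y i s')
    (hlam_prefix : ∀ (i : Fin (k + 1)) (s s' : Fin (k + 1) → Fin Dm),
      (∀ j, j ≤ i → s j = s' j) → lam i s = lam i s')
    (hcomplete : ∀ (i : Fin (k + 1)) (s : Fin (k + 1) → Fin Dm),
      ∑ t : Fin Dm, (lam i (Function.update s i t) : ℂ) •
          Matrix.vecMulVec (y i (Function.update s i t)) (star (y i (Function.update s i t)))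
        = (1 : Matrix (Fin (2 ^ ℓ)) (Fin (2 ^ ℓ)) ℂ)) :
    ∀ (s₀ : Fin Dm) (m : Pairing k), m ≠ ePairing k →
      ∑ s' : Fin k → Fin Dm,
        (let s : Fin (k + 1) → Fin Dm := Fin.cons s₀ s'
         let ψ : Fin k × Bool → (Fin (2 ^ ℓ) → ℂ) :=
           fun p => if p.2 then star (y p.1.succ s) else y p.1.succ s
         (∏ p ∈ Finset.univ.filter
              (fun p : Fin k × Bool =>
                (2 * (p.1 : ℕ) + (if p.2 then 1 else 0)) <
                  (2 * (((m : Equiv.Perm (Fin k × Bool)) p).1 : ℕ) +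
                    (if ((m : Equiv.Perm (Fin k × Bool)) p).2 then 1 else 0))),
            ‖∑ x, ψ p x * ψ ((m : Equiv.Perm (Fin k × Bool)) p) x‖) *
          ∏ i : Fin k, lam i.succ s)
        ≤ ((2 : ℝ) ^ ℓ) ^
            (k - (Finset.univ.filter
              (fun i : Fin k =>
                (m : Equiv.Perm (Fin k × Bool)) (i, false) ≠ (i, true))).card / 2) := by
  intro s₀ m _
  have hlam_nonneg : ∀ i s, 0 ≤ lam i s := fun i s => (hlam i s).1.le
  calc _ = ∑ s', ∏ i, levelFactor y lam s₀ m i s' :=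
        sum_congr rfl fun s' _ => (prod_levelFactor y lam s₀ m s').symm
    _ ≤ ∏ i, √(Fintype.card (Fin (2 ^ ℓ))) ^
          (2 - #(univ.filter fun b : Bool => (m.1 (i, b)).1 < i)) :=
        sum_prod_le_prod_of_sum_update_le _ _ (levelFactor_nonneg y lam s₀ hlam_nonneg m)
          (fun _ => by positivity)
          (fun _ _ _ => levelFactor_congr y lam s₀ hy_prefix hlam_prefix m)
          (sum_levelFactor_update_le hy_unit hlam_nonneg hy_prefix hcomplete m)
    _ ≤ _ := by
        simpa only [Fintype.card_fin, Nat.cast_pow, Nat.cast_ofNat, card_univ,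
          m.sum_card_filter_fst_apply_lt] using
          prod_sqrt_pow_two_sub_le (univ : Finset (Fin k)) (one_le_pow₀ (one_le_two (α := ℝ)))
            fun i => (card_le_univ (univ.filter fun b : Bool => (m.1 (i, b)).1 < i)).trans_eq
              Fintype.card_bool

/-- For the adaptive measurement data `y, λ`, define for each sequence `s`
the `2k` vectors `ψ_{2i−1} = y^i_{s₀…s_i}` and `ψ_{2i} = conj(y^i_{s₀…s_i})` (here the point
`2i−1` is encoded as `(i, false)` and `2i` as `(i, true)`).  For every fixed `s₀` and every
perfect matching `m ≠ e`, with `L_m` the number of indices `i` whose pair `{2i−1, 2i}` lies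
in a non-trivial connected component of the union graph of `m` and `e` (equivalently, whose
pair is not also a pair of `m`), the product over the pairs `{m(2i−1), m(2i)}` of `m`
(each pair represented by its lower endpoint) satisfies
`∑_{s₁,…,s_k} ∏_{pairs} |∑_x ψ_{m(2i−1)}(x) ψ_{m(2i)}(x)| · ∏_i λ^i_{s₀…s_i}
  ≤ D^{k − ⌊L_m/2⌋}`. -/
theorem orthogonal_loop_decomposition_bound
    (ℓ k Dm : ℕ) (hℓ : 1 ≤ ℓ) (hk : 1 ≤ k) (hDm : 1 ≤ Dm)
    (y : Fin (k + 1) → (Fin (k + 1) → Fin Dm) → (Fin (2 ^ ℓ) → ℂ))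
    (lam : Fin (k + 1) → (Fin (k + 1) → Fin Dm) → ℝ)
    (hy_unit : ∀ i s, ∑ x, ‖y i s x‖ ^ 2 = 1)
    (hlam : ∀ i s, 0 < lam i s ∧ lam i s ≤ 1)
    (hy_prefix : ∀ (i : Fin (k + 1)) (s s' : Fin (k + 1) → Fin Dm),
      (∀ j, j ≤ i → s j = s' j) → y i s = y i s')
    (hlam_prefix : ∀ (i : Fin (k + 1)) (s s' : Fin (k + 1) → Fin Dm),
      (∀ j, j ≤ i → s j = s' j) → lam i s = lam i s')
    (hcomplete : ∀ (i : Fin (k + 1)) (s : Fin (k + 1) → Fin Dm),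
      ∑ t : Fin Dm, (lam i (Function.update s i t) : ℂ) •
          Matrix.vecMulVec (y i (Function.update s i t)) (star (y i (Function.update s i t)))
        = (1 : Matrix (Fin (2 ^ ℓ)) (Fin (2 ^ ℓ)) ℂ)) :
    ∀ (s₀ : Fin Dm) (m : Pairing k), m ≠ ePairing k →
      ∑ s' : Fin k → Fin Dm,
        (let s : Fin (k + 1) → Fin Dm := Fin.cons s₀ s'
         let ψ : Fin k × Bool → (Fin (2 ^ ℓ) → ℂ) :=
           fun p => if p.2 then star (y p.1.succ s) else y p.1.succ s
         (∏ p ∈ Finset.univ.filter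
              (fun p : Fin k × Bool =>
                (2 * (p.1 : ℕ) + (if p.2 then 1 else 0)) <
                  (2 * (((m : Equiv.Perm (Fin k × Bool)) p).1 : ℕ) +
                    (if ((m : Equiv.Perm (Fin k × Bool)) p).2 then 1 else 0))),
            ‖∑ x, ψ p x * ψ ((m : Equiv.Perm (Fin k × Bool)) p) x‖) *
          ∏ i : Fin k, lam i.succ s)
        ≤ ((2 : ℝ) ^ ℓ) ^
            (k - (Finset.univ.filter
              (fun i : Fin k =>
                (m : Equiv.Perm (Fin k × Bool)) (i, false) ≠ (i, true))).card / 2) :=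
  orthogonal_loop_decomposition_bound_general ℓ k Dm y lam hy_unit hlam hy_prefix hlam_prefix
    hcomplete
end
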